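/- arXiv:1410.2061 — 2 statements merged into one kernel-verified Lean document; each statement's English description precedes it below -/
import Mathlib

section
/- Let 1 ≤ r ≤ ⌊(t+p−2)/p⌋ and let c_1, …, c_r be positive integers with c_k ≤ t − (k−1)p − 1 for all k. Let μ_{c_1,…,c_r} be the partition whose β-set is ⋃_{1 ≤ k ≤ r} {x ∈ ℤ : kt − c_k ≤ x ≤ kt − 1}. Then μ_{c_1,…,c_r} is a (t, t+1, …, t+p)-core partition if and only if c_k − c_{k+1} ≥ p for all 1 ≤ k ≤ r − 1. -/
open Finset

/-- A partition: a weakly decreasing finite list of positive integers. -/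
structure NatPartition where
  parts : List ℕ
  sorted : parts.Pairwise (· ≥ ·)
  pos : ∀ x ∈ parts, 0 < x

namespace NatPartition

/-- The size of a partition: the sum of its parts. -/
def size (l : NatPartition) : ℕ := l.parts.sum

/-- The hook length of the box in row `i`, column `j` (both 0-indexed):
arm + leg + 1, computed as `λ_i - j + #{k : λ_k > j} - i - 1`. -/
def hook (l : NatPartition) (i j : ℕ) : ℕ :=
  l.parts.getD i 0 - j + l.parts.countP (fun a => decide (j < a)) - i - 1

/-- The box `(i, j)` (0-indexed) belongs to the Young diagram of `l`. -/
def InDiagram (l : NatPartition) (i j : ℕ) : Prop :=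
  i < l.parts.length ∧ j < l.parts.getD i 0

/-- A partition is a `t`-core if no hook length is divisible by `t`. -/
def IsCore (l : NatPartition) (t : ℕ) : Prop :=
  ∀ i j, l.InDiagram i j → ¬ t ∣ l.hook i j

/-- The β-set of a partition: the set of first-column hook lengths. -/
def betaSet (l : NatPartition) : Finset ℕ :=
  (Finset.range l.parts.length).image (fun i => l.hook i 0)

end NatPartition

/-- β-set of the partition `μ_{c_1,…,c_r}`: the top `c k` elements of each
interval `[(k-1)(t+p)+1, kt-1]`, i.e. `⋃_{1 ≤ k ≤ r} [kt - c_k, kt - 1]`. -/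
def muBeta (t r : ℕ) (c : ℕ → ℕ) : Finset ℕ :=
  (Finset.Icc 1 r).biUnion (fun k => Finset.Icc (k * t - c k) (k * t - 1))


/-- downward-closed subsets of `range n` are initial segments. -/
lemma initseg (n : ℕ) (P : ℕ → Prop) [DecidablePred P]
    (hdown : ∀ m m', m' ≤ m → m < n → P m → P m') :
    ∀ m < n, (P m ↔ m < ((Finset.range n).filter P).card) := by
  intro m hm
  constructor
  · intro hPm
    have hsub : Finset.range (m + 1) ⊆ (Finset.range n).filter P := by
      intro x hx
      simp only [Finset.mem_range] at hx
      simp only [Finset.mem_filter, Finset.mem_range]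
      exact ⟨lt_of_lt_of_le hx hm, hdown m x (by omega) hm hPm⟩
    have := Finset.card_le_card hsub
    simpa using this
  · intro hcard
    by_contra hPm
    have hsub : (Finset.range n).filter P ⊆ Finset.range m := by
      intro x hx
      simp only [Finset.mem_filter, Finset.mem_range] at hx
      simp only [Finset.mem_range]
      by_contra hxm
      exact hPm (hdown x m (by omega) hx.1 hx.2)
    have := Finset.card_le_card hsub
    simp only [Finset.card_range] at this
    omega

/-- key countP lemma for sorted lists -/
lemma sorted_countP_iff (L : List ℕ) (hL : L.Pairwise (· ≥ ·)) (j : ℕ) :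
    ∀ m < L.length, (j < L.getD m 0 ↔ m < L.countP (fun a => decide (j < a))) := by
  induction L with
  | nil => intro m hm; simp at hm
  | cons a L ih =>
    rw [List.pairwise_cons] at hL
    intro m hm
    rw [List.countP_cons]
    rcases m with _ | m
    · simp only [List.getD_cons_zero]
      by_cases hja : j < a
      · simp [hja]
      · have h0 : L.countP (fun a => decide (j < a)) = 0 := by
          apply List.countP_eq_zero.mpr
          intro b hb
          simp only [decide_eq_true_iff]
          have := hL.1 b hb
          omega
        rw [decide_eq_false hja, if_neg (by simp), h0]
        omega
    · simp only [List.getD_cons_succ]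
      have hm' : m < L.length := by simpa using hm
      by_cases hja : j < a
      · rw [decide_eq_true hja, if_pos rfl]
        rw [ih hL.2 m hm']
        omega
      · have h0 : L.countP (fun a => decide (j < a)) = 0 := by
          apply List.countP_eq_zero.mpr
          intro b hb
          simp only [decide_eq_true_iff]
          have := hL.1 b hb
          omega
        have hLm : L.getD m 0 ≤ a := by
          rw [List.getD_eq_getElem _ _ hm']
          exact hL.1 _ (L.getElem_mem hm')
        rw [decide_eq_false hja, if_neg (by simp), h0]
        omega

namespace NatPartition

lemma countP_pos (l : NatPartition) :
    l.parts.countP (fun a => decide (0 < a)) = l.parts.length := by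
  rw [List.countP_eq_length]
  intro a ha
  simpa using l.pos a ha

/-- first-column hooks -/
lemma hook_zero (l : NatPartition) {i : ℕ} (hi : i < l.parts.length) :
    l.hook i 0 = l.parts.getD i 0 + (l.parts.length - i - 1) := by
  unfold hook
  rw [l.countP_pos]
  omega

lemma getD_anti (l : NatPartition) {i k : ℕ} (hik : i ≤ k) (hk : k < l.parts.length) :
    l.parts.getD k 0 ≤ l.parts.getD i 0 := by
  have hi : i < l.parts.length := lt_of_le_of_lt hik hk
  rw [List.getD_eq_getElem _ _ hk, List.getD_eq_getElem _ _ hi]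
  rcases eq_or_lt_of_le hik with rfl | h
  · exact le_refl _
  · exact List.Pairwise.rel_get_of_lt l.sorted (by simpa using h)

lemma mem_betaSet (l : NatPartition) (x : ℕ) :
    x ∈ l.betaSet ↔ ∃ i < l.parts.length, x = l.parts.getD i 0 + (l.parts.length - i - 1) := by
  unfold betaSet
  simp only [Finset.mem_image, Finset.mem_range]
  constructor
  · rintro ⟨i, hi, rfl⟩
    exact ⟨i, hi, l.hook_zero hi⟩
  · rintro ⟨i, hi, rfl⟩
    exact ⟨i, hi, l.hook_zero hi⟩

end NatPartition

namespace NatPartition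

lemma b_strict (l : NatPartition) {i k : ℕ} (hik : i < k) (hk : k < l.parts.length) :
    l.parts.getD k 0 + (l.parts.length - k - 1) < l.parts.getD i 0 + (l.parts.length - i - 1) := by
  have := l.getD_anti (le_of_lt hik) hk
  omega

lemma isCore_iff (l : NatPartition) (s : ℕ) (hs : 0 < s) :
    l.IsCore s ↔ ∀ x ∈ l.betaSet, s ≤ x → x - s ∈ l.betaSet := by
  set n := l.parts.length with hn
  constructor
  · -- IsCore → closed under subtracting s
    intro hcore x hx hsx
    by_contra hxs
    rw [l.mem_betaSet] at hx
    obtain ⟨i, hi, hxi⟩ := hx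
    have hxsmem : ∀ m < n, l.parts.getD m 0 + (n - m - 1) ≠ x - s := by
      intro m hm heq
      exact hxs (l.mem_betaSet (x - s) |>.2 ⟨m, hm, heq.symm⟩)
    set K := ((Finset.range n).filter
      (fun m => x - s < l.parts.getD m 0 + (n - m - 1))).card with hK
    have hiff : ∀ m < n, (x - s < l.parts.getD m 0 + (n - m - 1) ↔ m < K) := by
      apply initseg
      intro m m' hmm' hmn hPm
      have := l.getD_anti hmm' hmn
      omega
    have hKn : K ≤ n :=
      le_trans (Finset.card_filter_le _ _) (le_of_eq (Finset.card_range n))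
    have hiK : i < K := (hiff i hi).1 (by omega)
    -- n - K ≤ x - s via injectivity
    have hnK : n - K ≤ x - s := by
      have hcard : ((Finset.range n).filter
          (fun m => ¬ (x - s < l.parts.getD m 0 + (n - m - 1)))).card = n - K := by
        have := Finset.card_filter_add_card_filter_not (s := Finset.range n)
          (p := fun m => x - s < l.parts.getD m 0 + (n - m - 1))
        simp only [Finset.card_range] at this
        omega
      rw [← hcard]
      have := Finset.card_le_card_of_injOn
        (f := fun m => l.parts.getD m 0 + (n - m - 1))
        (s := (Finset.range n).filter
          (fun m => ¬ (x - s < l.parts.getD m 0 + (n - m - 1))))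
        (t := Finset.range (x - s)) ?_ ?_
      · simpa using this
      · intro m hm
        simp only [Finset.coe_filter, Finset.mem_coe, Finset.mem_filter, Set.mem_setOf_eq, Finset.mem_range, not_lt] at hm
        have hne := hxsmem m hm.1
        simp only [Finset.mem_coe, Finset.coe_range, Set.mem_Iio, Finset.mem_range]
        omega
      · intro m1 hm1 m2 hm2 hfe
        simp only [Finset.coe_filter, Set.mem_setOf_eq, Finset.mem_range] at hm1 hm2
        have hfe' : l.parts.getD m1 0 + (n - m1 - 1) = l.parts.getD m2 0 + (n - m2 - 1) := hfe
        by_contra hne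
        rcases Nat.lt_or_ge m1 m2 with h | h
        · have := l.b_strict h hm2.1; omega
        · have hlt : m2 < m1 := by omega
          have := l.b_strict hlt hm1.1; omega
    -- the claim: λ m > j ↔ m < K
    set j := x - s - (n - K) with hj
    have hclaim : ∀ m < n, (j < l.parts.getD m 0 ↔ m < K) := by
      intro m hm
      constructor
      · intro hjm
        by_contra hmK
        have hKm : K ≤ m := by omega
        have hne := hxsmem K (by omega)
        have hnot : ¬ (x - s < l.parts.getD K 0 + (n - K - 1)) := by
          rw [hiff K (by omega)]
          omega
        have := l.getD_anti hKm hm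
        omega
      · intro hmK
        have hK1 : (K : ℕ) - 1 < n := by omega
        have h1 := (hiff (K - 1) hK1).2 (by omega)
        have h2 := l.getD_anti (show m ≤ K - 1 by omega) hK1
        omega
    -- countP = K
    have hiff2 := sorted_countP_iff l.parts l.sorted j
    have hcle : l.parts.countP (fun a => decide (j < a)) ≤ n :=
      List.countP_le_length
    have hcj : l.parts.countP (fun a => decide (j < a)) = K := by
      set cj := l.parts.countP (fun a => decide (j < a)) with hcjdef
      rcases Nat.lt_trichotomy cj K with h | h | h
      · have h1 := (hclaim cj (by omega)).2 h
        have h2 := (hiff2 cj (by omega)).1 h1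
        omega
      · exact h
      · have h1 := (hiff2 K (by omega)).2 h
        have h2 := (hclaim K (by omega)).1 h1
        omega
    -- the box
    have hji : j < l.parts.getD i 0 := (hclaim i hi).2 hiK
    apply hcore i j ⟨hi, hji⟩
    have hhook : l.hook i j = s := by
      show l.parts.getD i 0 - j + l.parts.countP (fun a => decide (j < a)) - i - 1 = s
      rw [hcj]
      omega
    rw [hhook]
  · -- closed → IsCore
    intro hclosed i j hdiag hdvd
    obtain ⟨hin, hjl⟩ := hdiag
    set cj := l.parts.countP (fun a => decide (j < a)) with hcjdef
    have hiff2 := sorted_countP_iff l.parts l.sorted j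
    have hicj : i < cj := (hiff2 i hin).1 hjl
    have hcjn : cj ≤ n := List.countP_le_length
    have hhook : l.hook i j = l.parts.getD i 0 - j + cj - i - 1 := rfl
    set b := l.parts.getD i 0 + (n - i - 1) with hb
    have hbβ : b ∈ l.betaSet := (l.mem_betaSet b).2 ⟨i, hin, rfl⟩
    have hx : l.hook i j + (n + j - cj) = b := by
      rw [hhook]
      omega
    set x := n + j - cj with hxdef
    have hxβ : x ∉ l.betaSet := by
      intro hmem
      obtain ⟨m, hm, hbm⟩ := (l.mem_betaSet x).1 hmem
      by_cases hmc : m < cj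
      · have h1 := (hiff2 m hm).2 hmc
        omega
      · have h1 : ¬ (j < l.parts.getD m 0) := fun hc => hmc ((hiff2 m hm).1 hc)
        omega
    obtain ⟨q, hq⟩ := hdvd
    have hstep : ∀ e, e ≤ q → b - s * e ∈ l.betaSet := by
      intro e
      induction e with
      | zero => intro _; simpa using hbβ
      | succ e ih =>
        intro he
        have hby := ih (by omega)
        have hmul : s * (e + 1) = s * e + s := by ring
        have hmul2 : s * (e + 1) ≤ s * q := Nat.mul_le_mul_left s he
        have hsle : s ≤ b - s * e := by omega
        have := hclosed _ hby hsle
        have heq : b - s * e - s = b - s * (e + 1) := by omega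
        rwa [heq] at this
    have hfin := hstep q le_rfl
    have hxq : b - s * q = x := by omega
    rw [hxq] at hfin
    exact hxβ hfin

end NatPartition

theorem stmt8 (t p r : ℕ) (ht : 0 < t) (hp : 0 < p)
    (hr1 : 1 ≤ r) (hr2 : r ≤ (t + p - 2) / p) (c : ℕ → ℕ)
    (hc : ∀ k, 1 ≤ k → k ≤ r → 0 < c k ∧ c k ≤ t - (k - 1) * p - 1)
    (l : NatPartition) (hl : l.betaSet = muBeta t r c) :
    (∀ i ≤ p, l.IsCore (t + i)) ↔
      ∀ k, 1 ≤ k → k ≤ r - 1 → c (k + 1) + p ≤ c k := by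
  have ht2 : 2 ≤ t := by
    have h := (Nat.le_div_iff_mul_le hp).1 (le_trans hr1 hr2)
    omega
  have hc' : ∀ k, 1 ≤ k → k ≤ r → 0 < c k ∧ c k + (k - 1) * p + 1 ≤ t := by
    intro k h1 h2
    obtain ⟨h3, h4⟩ := hc k h1 h2
    refine ⟨h3, ?_⟩
    omega
  have hmem : ∀ y, y ∈ muBeta t r c ↔
      ∃ k, 1 ≤ k ∧ k ≤ r ∧ (k * t - c k ≤ y ∧ y ≤ k * t - 1) := by
    intro y
    simp only [muBeta, Finset.mem_biUnion, Finset.mem_Icc]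
    constructor
    · rintro ⟨k, ⟨a, b⟩, hcc⟩; exact ⟨k, a, b, hcc⟩
    · rintro ⟨k, a, b, hcc⟩; exact ⟨k, ⟨a, b⟩, hcc⟩
  have hcore_iff : ∀ i, l.IsCore (t + i) ↔
      (∀ x ∈ muBeta t r c, t + i ≤ x → x - (t + i) ∈ muBeta t r c) := by
    intro i
    rw [l.isCore_iff (t + i) (by omega), hl]
  simp only [hcore_iff]
  constructor
  · -- closure → c condition
    intro hcl k hk1 hk2
    have hk2' : k + 1 ≤ r := by omega
    obtain ⟨h1p, h1⟩ := hc' (k + 1) (by omega) hk2'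
    obtain ⟨h0p, h0⟩ := hc' k hk1 (by omega)
    have h1' : c (k + 1) + k * p + 1 ≤ t := by simpa using h1
    have h0' : c k + (k - 1) * p + 1 ≤ t := h0
    set x := (k + 1) * t - c (k + 1) with hxd
    have hkt : k * t + t = (k + 1) * t := by ring
    have hk1t : t ≤ k * t := Nat.le_mul_of_pos_left t (by omega)
    have hk1p : p ≤ k * p := Nat.le_mul_of_pos_left p (by omega)
    have hxmem : x ∈ muBeta t r c :=
      (hmem x).2 ⟨k + 1, by omega, hk2', le_refl _, by omega⟩
    have hxge : t + p ≤ x := by omega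
    have hy := hcl p le_rfl x hxmem hxge
    obtain ⟨k', h1'', h2'', h3', h4'⟩ := (hmem _).1 hy
    rcases Nat.lt_trichotomy k' k with hlt | rfl | hgt
    · -- k' < k impossible
      have hmle : k' * t ≤ (k - 1) * t := Nat.mul_le_mul_right t (by omega)
      have hk1t' : (k - 1) * t + t = k * t := by
        have hk : k - 1 + 1 = k := by omega
        calc (k - 1) * t + t = (k - 1 + 1) * t := by ring
          _ = k * t := by rw [hk]
      omega
    · -- k' = k: conclude
      omega
    · -- k' > k impossible
      obtain ⟨hkp', hck'⟩ := hc' k' h1'' h2''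
      have hA : k * t ≤ (k' - 1) * t := Nat.mul_le_mul_right t (by omega)
      have hB : k * p ≤ (k' - 1) * p := Nat.mul_le_mul_right p (by omega)
      have hk't : (k' - 1) * t + t = k' * t := by
        have hk : k' - 1 + 1 = k' := by omega
        calc (k' - 1) * t + t = (k' - 1 + 1) * t := by ring
          _ = k' * t := by rw [hk]
      omega
  · -- c condition → closure
    intro hrhs i hi x hx hle
    obtain ⟨k, hk1, hk2, h3, h4⟩ := (hmem x).1 hx
    obtain ⟨h0p, h0⟩ := hc' k hk1 hk2
    rcases eq_or_lt_of_le hk1 with rfl | hk2lt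
    · -- k = 1: vacuous
      simp only [one_mul] at h4
      omega
    · have hkm : 2 ≤ k := hk2lt
      have hr2' : 1 ≤ k - 1 ∧ k - 1 ≤ r - 1 := by omega
      have hrh := hrhs (k - 1) hr2'.1 hr2'.2
      have hkk : k - 1 + 1 = k := by omega
      rw [hkk] at hrh
      -- hrh : c k + p ≤ c (k - 1)
      have hkt : (k - 1) * t + t = k * t := by
        calc (k - 1) * t + t = (k - 1 + 1) * t := by ring
          _ = k * t := by rw [hkk]
      have hpk : p ≤ (k - 1) * p := Nat.le_mul_of_pos_left p (by omega)
      refine (hmem _).2 ⟨k - 1, by omega, by omega, ?_, ?_⟩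
      · omega
      · omega
end

section
/- For every positive integer t, the largest size of a (t, t+1)-core partition is C(t+2, 4), and there is exactly one (t, t+1)-core partition of this size. -/
open Finset

/-! ### Auxiliary material -/

lemma lower_eq_range (s : Finset ℕ) (h : ∀ a b : ℕ, a ≤ b → b ∈ s → a ∈ s) :
    s = Finset.range s.card := by
  have hsub : ∀ x ∈ s, x < s.card := by
    intro x hx
    have hss : Finset.range (x+1) ⊆ s := by
      intro y hy
      exact h y x (Nat.lt_succ_iff.mp (Finset.mem_range.mp hy)) hx
    have := Finset.card_le_card hss
    simpa using this
  refine Finset.eq_of_subset_of_card_le (fun x hx => Finset.mem_range.mpr (hsub x hx)) (by simp)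

lemma countP_eq_card_filter_range (L : List ℕ) (p : ℕ → Bool) :
    L.countP p = ((Finset.range L.length).filter (fun i => p (L.getD i 0))).card := by
  induction L with
  | nil => simp
  | cons a T ih =>
    rw [List.countP_cons, ih]
    rw [Finset.card_filter, Finset.card_filter]
    rw [List.length_cons, Finset.sum_range_succ']
    simp [List.getD_cons_succ, List.getD_cons_zero]

namespace NatPartition

variable (l : NatPartition)

/-- number of parts -/
def k : ℕ := l.parts.length

/-- the `i`-th part (0 out of range) -/
def lam (i : ℕ) : ℕ := l.parts.getD i 0

/-- number of parts greater than `j` -/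
def cgt (j : ℕ) : ℕ := l.parts.countP (fun a => decide (j < a))

/-- first-column hook length of row `i` -/
def hk (i : ℕ) : ℕ := l.lam i + (l.k - 1 - i)

/-- the strictly monotone function enumerating the complement of the β-set -/
def g (j : ℕ) : ℕ := j + (l.k - l.cgt j)

lemma lam_pos {i : ℕ} (hi : i < l.k) : 0 < l.lam i := by
  have : l.lam i = l.parts[i] := List.getD_eq_getElem l.parts 0 hi
  rw [this]
  exact l.pos _ (List.getElem_mem hi)

lemma lam_anti {i j : ℕ} (hij : i ≤ j) : l.lam j ≤ l.lam i := by
  rcases Nat.lt_or_ge j l.parts.length with hj | hj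
  · rcases Nat.eq_or_lt_of_le hij with rfl | hlt
    · exact le_refl _
    · have hi : i < l.parts.length := lt_trans hlt hj
      have h1 : l.lam i = l.parts[i] := List.getD_eq_getElem l.parts 0 hi
      have h2 : l.lam j = l.parts[j] := List.getD_eq_getElem l.parts 0 hj
      rw [h1, h2]
      have := List.pairwise_iff_getElem.mp l.sorted i j hi hj hlt
      exact this
  · have : l.lam j = 0 := by
      unfold lam
      simp [List.getD_eq_getElem?_getD, List.getElem?_eq_none hj]
    omega

lemma cgt_eq_card (j : ℕ) :
    l.cgt j = ((Finset.range l.k).filter (fun i => decide (j < l.lam i))).card := by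
  unfold cgt k lam
  exact countP_eq_card_filter_range l.parts _

lemma lt_cgt_iff {i : ℕ} (hi : i < l.k) (j : ℕ) : j < l.lam i ↔ i < l.cgt j := by
  set F := (Finset.range l.k).filter (fun i => decide (j < l.lam i)) with hF
  have hlow : ∀ a b : ℕ, a ≤ b → b ∈ F → a ∈ F := by
    intro a b hab hb
    rw [hF, Finset.mem_filter, Finset.mem_range] at hb ⊢
    refine ⟨lt_of_le_of_lt hab hb.1, ?_⟩
    have := hb.2
    simp only [decide_eq_true_eq] at this ⊢
    exact lt_of_lt_of_le this (l.lam_anti hab)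
  have hrange : F = Finset.range F.card := lower_eq_range F hlow
  have hcard : l.cgt j = F.card := l.cgt_eq_card j
  constructor
  · intro h
    have : i ∈ F := by
      rw [hF, Finset.mem_filter, Finset.mem_range]
      exact ⟨hi, by simpa using h⟩
    rw [hrange, Finset.mem_range] at this
    omega
  · intro h
    have : i ∈ F := by rw [hrange, Finset.mem_range]; omega
    rw [hF, Finset.mem_filter] at this
    simpa using this.2

lemma cgt_le (j : ℕ) : l.cgt j ≤ l.k := by
  rw [cgt_eq_card]
  exact le_trans (Finset.card_filter_le _ _) (by simp)

lemma cgt_zero : l.cgt 0 = l.k := by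
  unfold cgt k
  rw [List.countP_eq_length]
  intro a ha
  simpa using l.pos a ha

lemma hook_zero_eq {i : ℕ} (hi : i < l.k) : l.hook i 0 = l.hk i := by
  have h1 : 0 < l.lam i := l.lam_pos hi
  have h2 : l.cgt 0 = l.k := l.cgt_zero
  show l.lam i - 0 + l.cgt 0 - i - 1 = l.lam i + (l.k - 1 - i)
  omega

lemma hk_eq {i : ℕ} (hi : i < l.k) : l.hk i + i + 1 = l.lam i + l.k := by
  have := l.lam_pos hi
  unfold hk
  omega

lemma mem_betaSet_iff {m : ℕ} : m ∈ l.betaSet ↔ ∃ i, i < l.k ∧ l.hk i = m := by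
  unfold betaSet
  simp only [Finset.mem_image, Finset.mem_range]
  constructor
  · rintro ⟨i, hi, rfl⟩
    exact ⟨i, hi, (l.hook_zero_eq hi).symm⟩
  · rintro ⟨i, hi, rfl⟩
    exact ⟨i, hi, l.hook_zero_eq hi⟩

/-- the hook formula: for a box in the diagram, `hook i j + g j = hk i`. -/
lemma hook_add_g {i j : ℕ} (hi : i < l.k) (hj : j < l.lam i) :
    l.hook i j + l.g j = l.hk i ∧ 0 < l.hook i j := by
  have hic : i < l.cgt j := (l.lt_cgt_iff hi j).mp hj
  have hck : l.cgt j ≤ l.k := l.cgt_le j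
  have hkeq : l.hk i + i + 1 = l.lam i + l.k := l.hk_eq hi
  show l.lam i - j + l.cgt j - i - 1 + (j + (l.k - l.cgt j)) = l.hk i ∧
    0 < l.lam i - j + l.cgt j - i - 1
  omega

lemma g_not_mem (j : ℕ) : l.g j ∉ l.betaSet := by
  rw [mem_betaSet_iff]
  rintro ⟨i, hi, hgi⟩
  have hkeq : l.hk i + i + 1 = l.lam i + l.k := l.hk_eq hi
  have hck : l.cgt j ≤ l.k := l.cgt_le j
  rcases Nat.lt_or_ge j (l.lam i) with h | h
  · have hic : i < l.cgt j := (l.lt_cgt_iff hi j).mp h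
    unfold g at hgi
    omega
  · have hic : l.cgt j ≤ i := by
      by_contra hc
      push_neg at hc
      have := (l.lt_cgt_iff hi j).mpr hc
      omega
    unfold g at hgi
    omega

end NatPartition

namespace NatPartition

variable (l : NatPartition)

lemma hk_add_eq {i : ℕ} (hi : i < l.k) : l.hk i + i + 1 = l.lam i + l.k := l.hk_eq hi

lemma hk_strict {i i' : ℕ} (h : i < i') (hi' : i' < l.k) : l.hk i' + (i' - i) ≤ l.hk i := by
  have h1 := l.hk_eq (lt_trans h hi')
  have h2 := l.hk_eq hi'
  have h3 := l.lam_anti (le_of_lt h)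
  omega

lemma g_surj {i m : ℕ} (hi : i < l.k) (hm : m < l.hk i) (hmB : m ∉ l.betaSet) :
    ∃ j, j < l.lam i ∧ l.g j = m := by
  classical
  -- the set of indices whose first-column hook is ≥ m is a lower set `range K`
  set F := (Finset.range l.k).filter (fun i' => decide (m ≤ l.hk i')) with hF
  have hlow : ∀ a b : ℕ, a ≤ b → b ∈ F → a ∈ F := by
    intro a b hab hb
    rw [hF, Finset.mem_filter, Finset.mem_range] at hb ⊢
    rcases Nat.eq_or_lt_of_le hab with rfl | hlt
    · exact hb
    · refine ⟨lt_of_le_of_lt hab hb.1, ?_⟩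
      simp only [decide_eq_true_eq] at *
      have := l.hk_strict hlt hb.1
      omega
  have hrange : F = Finset.range F.card := lower_eq_range F hlow
  set K := F.card with hK
  have hmemF : ∀ i', i' ∈ F ↔ i' < K := by
    intro i'; rw [hrange, Finset.mem_range]
  have hiF : i ∈ F := by
    rw [hF, Finset.mem_filter, Finset.mem_range]
    exact ⟨hi, by simp; omega⟩
  have hiK : i < K := (hmemF i).mp hiF
  have hKk : K ≤ l.k := by
    have : F ⊆ Finset.range l.k := Finset.filter_subset _ _
    have := Finset.card_le_card this
    simpa [hK] using this
  -- indices in [K, k) have hk < m ; they inject into range m, so k - K ≤ m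
  have hbig : ∀ i', K ≤ i' → i' < l.k → l.hk i' < m := by
    intro i' h1 h2
    by_contra hc
    push_neg at hc
    have : i' ∈ F := by
      rw [hF, Finset.mem_filter, Finset.mem_range]; exact ⟨h2, by simpa using hc⟩
    rw [hmemF] at this; omega
  have hkK : l.k - K ≤ m := by
    have hinj : Set.InjOn (fun i' => l.hk i') (Finset.Ico K l.k) := by
      intro a ha b hb hab
      simp only [Finset.coe_Ico, Set.mem_Ico] at ha hb
      by_contra hne
      rcases Nat.lt_or_ge a b with h | h
      · have := l.hk_strict h hb.2; simp only at hab; omega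
      · have h' : b < a := by omega
        have := l.hk_strict h' ha.2; simp only at hab; omega
    have hsub : Finset.image (fun i' => l.hk i') (Finset.Ico K l.k) ⊆ Finset.range m := by
      intro x hx
      rw [Finset.mem_image] at hx
      obtain ⟨a, ha, rfl⟩ := hx
      rw [Finset.mem_Ico] at ha
      exact Finset.mem_range.mpr (hbig a ha.1 ha.2)
    have h1 : (Finset.Ico K l.k).card = Finset.card (Finset.image (fun i' => l.hk i') (Finset.Ico K l.k)) :=
      (Finset.card_image_of_injOn hinj).symm
    have h2 := Finset.card_le_card hsub
    rw [← h1] at h2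
    simpa using h2
  -- define j
  set j := m + K - l.k with hj
  -- K ≥ 1 and hk (K-1) ≥ m+1 (using m ∉ betaSet)
  have hKpos : 1 ≤ K := by omega
  have hK1F : (K - 1) ∈ F := by rw [hmemF]; omega
  have hK1 : m + 1 ≤ l.hk (K-1) := by
    rw [hF, Finset.mem_filter] at hK1F
    have h1 : m ≤ l.hk (K-1) := by simpa using hK1F.2
    rcases Nat.eq_or_lt_of_le h1 with he | hlt
    · exfalso
      apply hmB
      rw [mem_betaSet_iff]
      exact ⟨K-1, by omega, he.symm⟩
    · omega
  have hK1k : K - 1 < l.k := by omega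
  -- lam values vs j
  have hsmall : ∀ i', i' < K → j < l.lam i' := by
    intro i' h1
    have h2 : i' < l.k := by omega
    have h3 := l.hk_eq h2
    have h4 := l.hk_eq hK1k
    have h5 : l.lam (K-1) ≤ l.lam i' := l.lam_anti (by omega)
    omega
  have hlarge : ∀ i', K ≤ i' → i' < l.k → l.lam i' ≤ j := by
    intro i' h1 h2
    have h3 := l.hk_eq h2
    have h4 := hbig i' h1 h2
    rcases Nat.eq_or_lt_of_le h1 with rfl | hlt
    · omega
    · have h5 := l.hk_strict (show (K:ℕ) < i' by omega) h2
      have h6 := hbig K (le_refl K) (by omega)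
      have h7 := l.hk_eq (show K < l.k by omega)
      omega
  -- cgt j = K
  have hcgt : l.cgt j = K := by
    rw [cgt_eq_card]
    have : (Finset.range l.k).filter (fun i' => decide (j < l.lam i')) = Finset.range K := by
      apply Finset.ext
      intro i'
      rw [Finset.mem_filter, Finset.mem_range, Finset.mem_range]
      constructor
      · rintro ⟨h1, h2⟩
        simp only [decide_eq_true_eq] at h2
        by_contra hc
        push_neg at hc
        have := hlarge i' hc h1
        omega
      · intro h1
        refine ⟨by omega, ?_⟩
        simp only [decide_eq_true_eq]
        exact hsmall i' h1
    rw [this]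
    simp
  refine ⟨j, ?_, ?_⟩
  · exact hsmall i hiK
  · unfold g
    rw [hcgt]
    omega

/-- characterization: `l` is a `t`-core iff its β-set is closed under subtracting `t`. -/
lemma isCore_iff_s16 {t : ℕ} (ht : 0 < t) :
    l.IsCore t ↔ ∀ b ∈ l.betaSet, t ≤ b → b - t ∈ l.betaSet := by
  constructor
  · intro hcore b hb htb
    by_contra hc
    rw [mem_betaSet_iff] at hb
    obtain ⟨i, hi, rfl⟩ := hb
    obtain ⟨j, hj, hgj⟩ := l.g_surj hi (show l.hk i - t < l.hk i by omega) hc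
    obtain ⟨hadd, hpos⟩ := l.hook_add_g hi hj
    have hhook : l.hook i j = t := by omega
    exact hcore i j ⟨hi, hj⟩ (by rw [hhook])
  · intro hclosed i j hij hdvd
    obtain ⟨hi, hj⟩ := hij
    have hi' : i < l.k := hi
    have hj' : j < l.lam i := hj
    obtain ⟨hadd, hpos⟩ := l.hook_add_g hi' hj'
    obtain ⟨a, ha⟩ := hdvd
    have hB : l.hk i ∈ l.betaSet := by rw [mem_betaSet_iff]; exact ⟨i, hi', rfl⟩
    have key : ∀ a' b, b ∈ l.betaSet → b = l.g j + t * a' → l.g j ∈ l.betaSet := by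
      intro a'
      induction a' with
      | zero => intro b hb he; simpa [he] using hb
      | succ n ih =>
        intro b hb he
        have h1 : t ≤ b := by nlinarith
        have h2 := hclosed b hb h1
        refine ih (b - t) h2 ?_
        rw [Nat.mul_succ] at he
        omega
    have : l.g j ∈ l.betaSet := key a (l.hk i) hB (by omega)
    exact l.g_not_mem j this

lemma card_betaSet : l.betaSet.card = l.k := by
  unfold betaSet
  rw [Finset.card_image_of_injOn]
  · rw [Finset.card_range]; rfl
  · intro a ha b hb hab
    simp only [Finset.coe_range, Set.mem_Iio] at ha hb
    have hab : l.hook a 0 = l.hook b 0 := hab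
    rw [l.hook_zero_eq ha, l.hook_zero_eq hb] at hab
    by_contra hne
    rcases Nat.lt_or_ge a b with h | h
    · have := l.hk_strict h hb; omega
    · have h' : b < a := by omega
      have := l.hk_strict h' ha; omega

lemma list_sum_eq (L : List ℕ) : L.sum = ∑ i ∈ Finset.range L.length, L.getD i 0 := by
  induction L with
  | nil => simp
  | cons a T ih =>
    rw [List.sum_cons, ih, List.length_cons, Finset.sum_range_succ']
    simp only [List.getD_cons_succ, List.getD_cons_zero]
    omega

lemma sum_betaSet : (∑ b ∈ l.betaSet, b) * 2 = l.size * 2 + l.k * (l.k - 1) := by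
  have h1 : ∑ b ∈ l.betaSet, b = ∑ i ∈ Finset.range l.k, l.hk i := by
    unfold betaSet
    rw [Finset.sum_image]
    · apply Finset.sum_congr rfl
      intro i hi
      exact l.hook_zero_eq (Finset.mem_range.mp hi)
    · intro a ha b hb hab
      have hab : l.hook a 0 = l.hook b 0 := hab
      rw [l.hook_zero_eq (Finset.mem_range.mp ha), l.hook_zero_eq (Finset.mem_range.mp hb)] at hab
      by_contra hne
      rcases Nat.lt_or_ge a b with h | h
      · have := l.hk_strict h (Finset.mem_range.mp hb); omega
      · have h' : b < a := by omega
        have := l.hk_strict h' (Finset.mem_range.mp ha); omega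
  have h2 : ∑ i ∈ Finset.range l.k, l.hk i = l.size + ∑ i ∈ Finset.range l.k, (l.k - 1 - i) := by
    unfold hk
    rw [Finset.sum_add_distrib]
    congr 1
    unfold size
    rw [list_sum_eq]
    rfl
  have h3 : ∑ i ∈ Finset.range l.k, (l.k - 1 - i) = ∑ i ∈ Finset.range l.k, i :=
    Finset.sum_range_reflect (fun i => i) l.k
  have h4 : (∑ i ∈ Finset.range l.k, i) * 2 = l.k * (l.k - 1) := Finset.sum_range_id_mul_two l.k
  rw [h1, h2, h3]
  omega

end NatPartition

namespace NatPartition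

/-- the ascending list of first-column hooks -/
def hkList (l : NatPartition) : List ℕ := List.ofFn (fun i : Fin l.k => l.hk (l.k - 1 - i))

lemma hkList_sorted (l : NatPartition) : l.hkList.Pairwise (· < ·) := by
  rw [hkList, List.pairwise_ofFn]
  intro i j hij
  have hj : l.k - 1 - (j:ℕ) < l.k := by have := j.2; omega
  have : l.k - 1 - (j:ℕ) < l.k - 1 - (i:ℕ) := by have := i.2; have := j.2; omega
  have h2 := l.hk_strict this (by have := i.2; omega)
  omega

lemma hkList_toFinset (l : NatPartition) : l.hkList.toFinset = l.betaSet := by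
  apply Finset.ext
  intro m
  rw [List.mem_toFinset, mem_betaSet_iff, hkList, List.mem_ofFn]
  constructor
  · rintro ⟨i, hi⟩
    exact ⟨l.k - 1 - (i:ℕ), by have := i.2; omega, hi⟩
  · rintro ⟨i, hi, he⟩
    exact ⟨⟨l.k - 1 - i, by omega⟩, by simp only; rw [show l.k - 1 - (l.k - 1 - i) = i by omega]; exact he⟩

lemma eq_of_betaSet_eq (l₁ l₂ : NatPartition) (h : l₁.betaSet = l₂.betaSet) : l₁ = l₂ := by
  have hk12 : l₁.k = l₂.k := by
    rw [← l₁.card_betaSet, ← l₂.card_betaSet, h]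
  have hlist : l₁.hkList = l₂.hkList := by
    apply List.Perm.eq_of_pairwise'
      (l₁.hkList_sorted.imp le_of_lt) (l₂.hkList_sorted.imp le_of_lt)
      (List.perm_of_nodup_nodup_toFinset_eq
        (l₁.hkList_sorted.nodup) (l₂.hkList_sorted.nodup)
        (by rw [l₁.hkList_toFinset, l₂.hkList_toFinset, h]))
  have hhk : ∀ i, i < l₁.k → l₁.hk i = l₂.hk i := by
    intro i hi
    have len1 : l₁.hkList.length = l₁.k := by rw [hkList]; simp
    have len2 : l₂.hkList.length = l₂.k := by rw [hkList]; simp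
    have hlt1 : l₁.k - 1 - i < l₁.hkList.length := by omega
    have hlt2 : l₁.k - 1 - i < l₂.hkList.length := by omega
    have h1 : l₁.hkList.getD (l₁.k - 1 - i) 0 = l₂.hkList.getD (l₁.k - 1 - i) 0 := by rw [hlist]
    rw [List.getD_eq_getElem _ 0 hlt1, List.getD_eq_getElem _ 0 hlt2] at h1
    simp only [hkList, List.getElem_ofFn] at h1
    rw [show l₁.k - 1 - (l₁.k - 1 - i) = i by omega] at h1
    rw [show l₂.k - 1 - (l₁.k - 1 - i) = i by omega] at h1
    exact h1
  have hlam : ∀ i, i < l₁.k → l₁.lam i = l₂.lam i := by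
    intro i hi
    have h1 := l₁.hk_eq hi
    have h2 := l₂.hk_eq (by omega : i < l₂.k)
    have := hhk i hi
    omega
  have hparts : l₁.parts = l₂.parts := by
    apply List.ext_getElem (by exact hk12)
    intro i h1 h2
    have := hlam i h1
    rwa [lam, lam, List.getD_eq_getElem l₁.parts 0 h1, List.getD_eq_getElem l₂.parts 0 h2] at this
  cases l₁; cases l₂
  simpa using hparts

end NatPartition

namespace NatPartition

lemma sorted_lt_slope (L : List ℕ) (hL : L.Pairwise (· < ·)) {a b : ℕ} (hab : a ≤ b)
    (hb : b < L.length) : L.getD a 0 + (b - a) ≤ L.getD b 0 := by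
  induction b, hab using Nat.le_induction with
  | base => omega
  | succ n hn ih =>
    have h1 : n < L.length := by omega
    have h2 := ih (by omega)
    have h3 : L[n] < L[n+1] := List.pairwise_iff_getElem.mp hL n (n+1) h1 hb (by omega)
    rw [List.getD_eq_getElem _ 0 h1] at h2
    rw [List.getD_eq_getElem _ 0 hb]
    omega

variable (B : Finset ℕ) (hB : ∀ b ∈ B, 0 < b)

/-- the partition whose β-set is `B` -/
def ofBeta : NatPartition := by
  refine ⟨List.ofFn (fun i : Fin B.card =>
      (B.sort (· ≤ ·)).getD (B.card - 1 - i) 0 - (B.card - 1 - i)), ?_, ?_⟩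
  · rw [List.pairwise_ofFn]
    intro i j hij
    have hlen : (B.sort (· ≤ ·)).length = B.card := Finset.length_sort _
    have hslope := sorted_lt_slope (B.sort (· ≤ ·)) (Finset.sortedLT_sort B).pairwise
      (show B.card - 1 - (j:ℕ) ≤ B.card - 1 - (i:ℕ) by have := j.2; omega)
      (show B.card - 1 - (i:ℕ) < (B.sort (· ≤ ·)).length by rw [hlen]; have := i.2; omega)
    simp only [ge_iff_le]
    have hi2 := i.2
    have hj2 := j.2
    omega
  · intro x hx
    rw [List.mem_ofFn] at hx
    obtain ⟨i, rfl⟩ := hx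
    have hlen : (B.sort (· ≤ ·)).length = B.card := Finset.length_sort _
    have h0 : 0 < (B.sort (· ≤ ·)).getD 0 0 := by
      have hl : 0 < (B.sort (· ≤ ·)).length := by rw [hlen]; have := i.2; omega
      rw [List.getD_eq_getElem _ 0 hl]
      exact hB _ ((Finset.mem_sort _).mp (List.getElem_mem hl))
    have hslope := sorted_lt_slope (B.sort (· ≤ ·)) (Finset.sortedLT_sort B).pairwise
      (show 0 ≤ B.card - 1 - (i:ℕ) by omega)
      (show B.card - 1 - (i:ℕ) < (B.sort (· ≤ ·)).length by rw [hlen]; have := i.2; omega)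
    have hi2 := i.2
    omega

lemma ofBeta_k : (ofBeta B hB).k = B.card := by
  unfold ofBeta k
  simp

lemma ofBeta_hk {i : ℕ} (hi : i < B.card) :
    (ofBeta B hB).hk i = (B.sort (· ≤ ·)).getD (B.card - 1 - i) 0 := by
  have hlam : (ofBeta B hB).lam i =
      (B.sort (· ≤ ·)).getD (B.card - 1 - i) 0 - (B.card - 1 - i) := by
    unfold ofBeta lam
    rw [List.getD_eq_getElem _ 0 (by simp; omega)]
    rw [List.getElem_ofFn]
  have hslope := sorted_lt_slope (B.sort (· ≤ ·)) (Finset.sortedLT_sort B).pairwise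
    (show 0 ≤ B.card - 1 - i by omega)
    (show B.card - 1 - i < (B.sort (· ≤ ·)).length by rw [Finset.length_sort]; omega)
  have h0 : 0 < (B.sort (· ≤ ·)).getD 0 0 := by
    have hl : 0 < (B.sort (· ≤ ·)).length := by rw [Finset.length_sort]; omega
    rw [List.getD_eq_getElem _ 0 hl]
    exact hB _ ((Finset.mem_sort _).mp (List.getElem_mem hl))
  unfold hk
  rw [hlam, ofBeta_k]
  omega

lemma betaSet_ofBeta : (ofBeta B hB).betaSet = B := by
  apply Finset.ext
  intro m
  rw [mem_betaSet_iff]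
  have hlen : (B.sort (· ≤ ·)).length = B.card := Finset.length_sort _
  constructor
  · rintro ⟨i, hi, he⟩
    rw [ofBeta_k] at hi
    rw [ofBeta_hk B hB hi] at he
    rw [← he]
    rw [List.getD_eq_getElem _ 0 (by omega)]
    exact (Finset.mem_sort _).mp (List.getElem_mem (by omega))
  · intro hm
    have : m ∈ B.sort (· ≤ ·) := (Finset.mem_sort _).mpr hm
    obtain ⟨idx, hidx, he⟩ := List.mem_iff_getElem.mp this
    rw [hlen] at hidx
    refine ⟨B.card - 1 - idx, by rw [ofBeta_k]; omega, ?_⟩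
    rw [ofBeta_hk B hB (by omega)]
    rw [show B.card - 1 - (B.card - 1 - idx) = idx by omega]
    rw [List.getD_eq_getElem _ 0 (by omega)]
    exact he

end NatPartition

/-! ### The poset `P` of positive numbers not representable by `t, t+1`, and chain sets -/

section Pset

variable (t : ℕ)

/-- chain set: for each residue `r < t`, the elements `q*t + r` for `q < c r` -/
def chainSet (c : ℕ → ℕ) : Finset ℕ :=
  (Finset.range t).biUnion (fun r => (Finset.range (c r)).image (fun q => q * t + r))

/-- the set of positive integers not representable as `a*t + b*(t+1)` -/
def Pset : Finset ℕ := chainSet t (fun r => r)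

variable {t}

lemma mem_chainSet {c : ℕ → ℕ} {n : ℕ} :
    n ∈ chainSet t c ↔ ∃ q r, q < c r ∧ r < t ∧ n = q * t + r := by
  unfold chainSet
  simp only [Finset.mem_biUnion, Finset.mem_range, Finset.mem_image]
  constructor
  · rintro ⟨r, hr, q, hq, rfl⟩; exact ⟨q, r, hq, hr, rfl⟩
  · rintro ⟨q, r, hq, hr, rfl⟩; exact ⟨r, hr, q, hq, rfl⟩

lemma decomp_unique (ht : 0 < t) {q r q' r' : ℕ} (hr : r < t) (hr' : r' < t)
    (he : q * t + r = q' * t + r') : q = q' ∧ r = r' := by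
  have h1 : (q * t + r) % t = r := by
    rw [mul_comm, Nat.mul_add_mod, Nat.mod_eq_of_lt hr]
  have h2 : (q' * t + r') % t = r' := by
    rw [mul_comm, Nat.mul_add_mod, Nat.mod_eq_of_lt hr']
  have h3 : r = r' := by rw [← h1, ← h2, he]
  constructor
  · subst h3
    have := Nat.eq_of_mul_eq_mul_right ht (show q * t = q' * t by omega)
    exact this
  · exact h3

lemma mem_Pset {n : ℕ} : n ∈ Pset t ↔ ∃ q r, q < r ∧ r < t ∧ n = q * t + r := mem_chainSet

lemma Pset_pos {n : ℕ} (hn : n ∈ Pset t) : 0 < n := by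
  rw [mem_Pset] at hn
  obtain ⟨q, r, h1, h2, rfl⟩ := hn
  omega

lemma Pset_sub_t (ht : 0 < t) {n : ℕ} (hn : n ∈ Pset t) (h : t ≤ n) : n - t ∈ Pset t := by
  rw [mem_Pset] at hn ⊢
  obtain ⟨q, r, h1, h2, rfl⟩ := hn
  have hq : 0 < q := by
    rcases Nat.eq_zero_or_pos q with rfl | h'
    · simp at h; omega
    · exact h'
  refine ⟨q - 1, r, by omega, h2, ?_⟩
  have : q * t = (q-1) * t + t := by
    cases q with
    | zero => omega
    | succ m => simp [Nat.succ_mul]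
  omega

lemma Pset_sub_t1 (ht : 0 < t) {n : ℕ} (hn : n ∈ Pset t) (h : t + 1 ≤ n) :
    n - (t+1) ∈ Pset t := by
  rw [mem_Pset] at hn ⊢
  obtain ⟨q, r, h1, h2, rfl⟩ := hn
  have hq : 0 < q := by
    rcases Nat.eq_zero_or_pos q with rfl | h'
    · simp at h; omega
    · exact h'
  refine ⟨q - 1, r - 1, by omega, by omega, ?_⟩
  have : q * t = (q-1) * t + t := by
    cases q with
    | zero => omega
    | succ m => simp [Nat.succ_mul]
  omega

/-- any finite set of positive integers closed under subtracting `t` and `t+1`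
is contained in `Pset t` -/
lemma closed_subset_Pset (ht : 0 < t) (B : Finset ℕ) (h0 : 0 ∉ B)
    (hsub1 : ∀ b ∈ B, t ≤ b → b - t ∈ B) (hsub2 : ∀ b ∈ B, t + 1 ≤ b → b - (t+1) ∈ B) :
    B ⊆ Pset t := by
  have claim : ∀ n, n ∈ B → ∀ q r, n = t * q + r → r < t → q < r := by
    intro n
    induction n using Nat.strong_induction_on with
    | _ n ih =>
      intro hn q r hdm hrt
      by_contra hc
      push_neg at hc
      rcases Nat.eq_zero_or_pos n with rfl | hnpos
      · exact h0 hn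
      rcases Nat.eq_zero_or_pos r with hr0 | hrpos
      · subst hr0
        have hq1 : 1 ≤ q := by
          rcases Nat.eq_zero_or_pos q with rfl | h'
          · simp at hdm; omega
          · exact h'
        have hmul : t * q = t * (q-1) + t := by
          cases q with
          | zero => omega
          | succ m => simp [Nat.mul_succ]
        have hnt : t ≤ n := by omega
        have hmem := hsub1 n hn hnt
        have := ih (n - t) (by omega) hmem (q-1) 0 (by omega) hrt
        omega
      · have hq1 : 1 ≤ q := by omega
        have hmul : t * q = t * (q-1) + t := by
          cases q with
          | zero => omega
          | succ m => simp [Nat.mul_succ]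
        have hnt : t + 1 ≤ n := by omega
        have hmem := hsub2 n hn hnt
        have := ih (n - (t+1)) (by omega) hmem (q-1) (r-1) (by omega) (by omega)
        omega
  intro n hn
  have hdm := Nat.div_add_mod n t
  have h1 := claim n hn (n / t) (n % t) (by omega) (Nat.mod_lt n ht)
  rw [mem_Pset]
  exact ⟨n / t, n % t, h1, Nat.mod_lt n ht, by rw [mul_comm]; omega⟩

lemma chain_disjoint (ht : 0 < t) (c : ℕ → ℕ) {r r' : ℕ} (hr : r < t) (hr' : r' < t)
    (hne : r ≠ r') :
    Disjoint ((Finset.range (c r)).image (fun q => q * t + r))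
      ((Finset.range (c r')).image (fun q => q * t + r')) := by
  rw [Finset.disjoint_left]
  intro x hx hx'
  rw [Finset.mem_image] at hx hx'
  obtain ⟨q, hq, he⟩ := hx
  obtain ⟨q', hq', he'⟩ := hx'
  exact hne (decomp_unique ht (q := q) (r := r) (q' := q') (r' := r') hr hr' (by omega)).2

/-- cardinality and sum of a chain set -/
lemma chainSet_card (ht : 0 < t) (c : ℕ → ℕ) :
    (chainSet t c).card = ∑ r ∈ Finset.range t, c r := by
  unfold chainSet
  rw [Finset.card_biUnion]
  · apply Finset.sum_congr rfl
    intro r _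
    rw [Finset.card_image_of_injOn (fun a _ b _ hab => by
      have h1 : a * t = b * t := by omega
      exact Nat.eq_of_mul_eq_mul_right ht h1)]
    simp
  · intro r hr r' hr' hne
    exact chain_disjoint ht c (Finset.mem_range.mp hr) (Finset.mem_range.mp hr') hne

lemma chainSet_sum (ht : 0 < t) (c : ℕ → ℕ) :
    ∑ b ∈ chainSet t c, b = ∑ r ∈ Finset.range t, ∑ q ∈ Finset.range (c r), (q * t + r) := by
  unfold chainSet
  rw [Finset.sum_biUnion]
  · apply Finset.sum_congr rfl
    intro r _
    rw [Finset.sum_image (fun a _ b _ hab => by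
      have h1 : a * t = b * t := by omega
      exact Nat.eq_of_mul_eq_mul_right ht h1)]
  · intro r hr r' hr' hne
    simp only [Function.onFun]
    exact chain_disjoint ht c (Finset.mem_range.mp (Finset.mem_coe.mp hr))
      (Finset.mem_range.mp (Finset.mem_coe.mp hr')) hne

end Pset

section ChainDecomp

variable {t : ℕ}

/-- the number of elements of `B` in the residue-`r` chain -/
def cfun (t : ℕ) (B : Finset ℕ) (r : ℕ) : ℕ :=
  ((Finset.range r).filter (fun q => q * t + r ∈ B)).card

lemma chain_aux (B : Finset ℕ) (hsub1 : ∀ b ∈ B, t ≤ b → b - t ∈ B) :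
    ∀ d a r, (a + d) * t + r ∈ B → a * t + r ∈ B := by
  intro d
  induction d with
  | zero => intro a r h; simpa using h
  | succ n ih =>
    intro a r h
    have h1 : (a + (n+1)) * t + r = ((a + n) * t + r) + t := by ring
    have h2 := hsub1 _ h (by omega)
    rw [h1] at h2
    simp only [Nat.add_sub_cancel] at h2
    exact ih a r h2

lemma chain_mem (ht : 0 < t) (B : Finset ℕ) (hBP : B ⊆ Pset t)
    (hsub1 : ∀ b ∈ B, t ≤ b → b - t ∈ B) {q r : ℕ} (hr : r < t) :
    q * t + r ∈ B ↔ q < cfun t B r := by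
  set F := (Finset.range r).filter (fun q => q * t + r ∈ B) with hF
  have hlow : ∀ a b : ℕ, a ≤ b → b ∈ F → a ∈ F := by
    intro a b hab hb
    rw [hF, Finset.mem_filter, Finset.mem_range] at hb ⊢
    refine ⟨by omega, ?_⟩
    have := chain_aux B hsub1 (b - a) a r (by rw [show a + (b-a) = b by omega]; exact hb.2)
    exact this
  have hrange : F = Finset.range F.card := lower_eq_range F hlow
  constructor
  · intro h
    have hqr : q < r := by
      have hp := hBP h
      rw [mem_Pset] at hp
      obtain ⟨q', r', h1, h2, h3⟩ := hp
      obtain ⟨rfl, rfl⟩ := decomp_unique ht hr h2 h3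
      exact h1
    have : q ∈ F := by rw [hF, Finset.mem_filter, Finset.mem_range]; exact ⟨hqr, h⟩
    rw [hrange, Finset.mem_range] at this
    exact this
  · intro h
    have : q ∈ F := by rw [hrange, Finset.mem_range]; exact h
    rw [hF, Finset.mem_filter] at this
    exact this.2

lemma cfun_le (B : Finset ℕ) (r : ℕ) : cfun t B r ≤ r := by
  unfold cfun
  exact le_trans (Finset.card_filter_le _ _) (by simp)

lemma B_eq_chainSet (ht : 0 < t) (B : Finset ℕ) (hBP : B ⊆ Pset t)
    (hsub1 : ∀ b ∈ B, t ≤ b → b - t ∈ B) : B = chainSet t (cfun t B) := by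
  apply Finset.ext
  intro b
  rw [mem_chainSet]
  constructor
  · intro hb
    have hp := hBP hb
    rw [mem_Pset] at hp
    obtain ⟨q, r, h1, h2, rfl⟩ := hp
    exact ⟨q, r, (chain_mem ht B hBP hsub1 h2).mp hb, h2, rfl⟩
  · rintro ⟨q, r, h1, h2, rfl⟩
    exact (chain_mem ht B hBP hsub1 h2).mpr h1

lemma cfun_step (ht : 0 < t) (B : Finset ℕ) (hBP : B ⊆ Pset t)
    (hsub1 : ∀ b ∈ B, t ≤ b → b - t ∈ B)
    (hsub2 : ∀ b ∈ B, t + 1 ≤ b → b - (t+1) ∈ B) {r : ℕ} (hr : r + 1 < t) :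
    cfun t B (r+1) ≤ cfun t B r + 1 := by
  by_contra hc
  push_neg at hc
  have h1 : (cfun t B r + 1) * t + (r + 1) ∈ B :=
    (chain_mem ht B hBP hsub1 hr).mpr (by omega)
  have h2 := hsub2 _ h1 (by nlinarith)
  have h3 : (cfun t B r + 1) * t + (r + 1) - (t + 1) = cfun t B r * t + r := by
    have : (cfun t B r + 1) * t = cfun t B r * t + t := by ring
    omega
  rw [h3] at h2
  have := (chain_mem ht B hBP hsub1 (by omega)).mp h2
  omega

end ChainDecomp

section Numeric

lemma six_sumsum : ∀ t : ℕ, 6 * (∑ r ∈ Finset.range t, ∑ q ∈ Finset.range r, q)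
    = t * (t-1) * (t-2) := by
  intro t
  induction t with
  | zero => simp
  | succ m ih =>
    rw [Finset.sum_range_succ, Nat.mul_add, ih]
    have hg : (∑ q ∈ Finset.range m, q) * 2 = m * (m-1) := Finset.sum_range_id_mul_two m
    match m with
    | 0 => simp
    | 1 => simp
    | (j+2) =>
      simp only [show j+2-1 = j+1 from rfl, show j+2-2 = j from rfl,
        show j+2+1-1 = j+2 from rfl, show j+2+1-2 = j+1 from rfl] at *
      nlinarith [hg]

lemma six_sumsq : ∀ t : ℕ, 6 * (∑ r ∈ Finset.range t, r * r) = t * (t-1) * (2*t-1) := by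
  intro t
  induction t with
  | zero => simp
  | succ m ih =>
    rw [Finset.sum_range_succ, Nat.mul_add, ih]
    match m with
    | 0 => simp
    | (j+1) =>
      rw [show j+1-1 = j from rfl, show 2*(j+1)-1 = 2*j+1 by omega,
          show j+1+1-1 = j+1 from rfl, show 2*(j+1+1)-1 = 2*j+3 by omega] at *
      nlinarith [ih]

lemma two_ch2 : ∀ n : ℕ, n.choose 2 * 2 = n * (n-1) := by
  intro n
  induction n with
  | zero => rfl
  | succ m ih =>
    rw [Nat.choose_succ_succ, Nat.choose_one_right, Nat.add_mul, ih]
    match m with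
    | 0 => rfl
    | (j+1) =>
      simp only [show j+1-1 = j from rfl, show j+1+1-1 = j+1 from rfl]
      ring

lemma six_ch3 : ∀ n : ℕ, n.choose 3 * 6 = n * (n-1) * (n-2) := by
  intro n
  induction n with
  | zero => rfl
  | succ m ih =>
    rw [Nat.choose_succ_succ, Nat.add_mul, ih]
    have h2 := two_ch2 m
    match m with
    | 0 => rfl
    | 1 => rfl
    | (j+2) =>
      simp only [show j+2-1 = j+1 from rfl, show j+2-2 = j from rfl,
        show j+2+1-1 = j+2 from rfl, show j+2+1-2 = j+1 from rfl] at *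
      nlinarith [h2]

lemma tf_ch4 : ∀ n : ℕ, n.choose 4 * 24 = n * (n-1) * (n-2) * (n-3) := by
  intro n
  induction n with
  | zero => rfl
  | succ m ih =>
    rw [Nat.choose_succ_succ, Nat.add_mul, ih]
    have h3 := six_ch3 m
    match m with
    | 0 => rfl
    | 1 => rfl
    | 2 => rfl
    | (j+3) =>
      simp only [show j+3-1 = j+2 from rfl, show j+3-2 = j+1 from rfl, show j+3-3 = j from rfl,
        show j+3+1-1 = j+3 from rfl, show j+3+1-2 = j+2 from rfl, show j+3+1-3 = j+1 from rfl] at *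
      nlinarith [h3]

end Numeric

section PsetSums

variable {t : ℕ}

lemma card_Pset_two (ht : 0 < t) : 2 * (Pset t).card = t * (t-1) := by
  unfold Pset
  rw [chainSet_card ht]
  have := Finset.sum_range_id_mul_two t
  omega

lemma sum_Pset_six (ht : 0 < t) : 6 * (∑ b ∈ Pset t, b) = t*(t+1)*(t-1)*(t-1) := by
  unfold Pset
  rw [chainSet_sum ht]
  have h1 : ∀ r : ℕ, ∑ q ∈ Finset.range r, (q * t + r) = (∑ q ∈ Finset.range r, q) * t + r * r := by
    intro r
    rw [Finset.sum_add_distrib, ← Finset.sum_mul]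
    congr 1
    rw [Finset.sum_const, Finset.card_range, smul_eq_mul]
  simp only [h1]
  rw [Finset.sum_add_distrib, ← Finset.sum_mul]
  have h2 := six_sumsum t
  have h3 := six_sumsq t
  set X := ∑ r ∈ Finset.range t, ∑ q ∈ Finset.range r, q with hX
  set Y := ∑ r ∈ Finset.range t, r * r with hY
  have key : (t * (t-1) * (t-2)) * t + t*(t-1)*(2*t-1) = t*(t+1)*(t-1)*(t-1) := by
    match t with
    | 0 => rfl
    | 1 => rfl
    | (m+2) =>
      rw [show m+2-1 = m+1 from rfl, show m+2-2 = m from rfl, show 2*(m+2)-1 = 2*m+3 by omega]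
      ring
  have hexp : 6 * (X * t + Y) = (6 * X) * t + 6 * Y := by ring
  rw [hexp, h2, h3]
  exact key

lemma key_t_identity (t : ℕ) :
    4 * (t*(t+1)*(t-1)*(t-1)) = (t+2)*(t+1)*t*(t-1) + 3*((t*(t-1))*((t*(t-1))-2)) := by
  match t with
  | 0 => rfl
  | 1 => rfl
  | (m+2) =>
    rw [show m+2-1 = m+1 from rfl]
    have e : (m+2)*(m+1) = (m*m+3*m+1) + 1 := by ring
    rw [e, show (m*m+3*m+1) + 1 - 2 = m*m + 3*m by omega]
    ring

lemma four_NN (N : ℕ) : (2*N)*(2*N-2) = 4*(N*(N-1)) := by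
  match N with
  | 0 => rfl
  | (m+1) =>
    rw [show 2*(m+1)-2 = 2*m by omega, show m+1-1 = m from rfl]
    ring

lemma size_aux {N S C4 : ℕ} (h1 : 6*S = t*(t+1)*(t-1)*(t-1)) (h2 : 2*N = t*(t-1))
    (h3 : C4*24 = (t+2)*(t+1)*t*(t-1)) : C4*2 + N*(N-1) = 2*S := by
  have h4 := four_NN N
  have h5 := key_t_identity t
  rw [h2] at h4
  omega

lemma ch4_t (t : ℕ) : (t+2).choose 4 * 24 = (t+2)*(t+1)*t*(t-1) := by
  have := tf_ch4 (t+2)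
  rw [show t+2-1 = t+1 from rfl, show t+2-2 = t from rfl, show t+2-3 = t-1 from rfl] at this
  exact this

end PsetSums

section MainIneq

lemma upper_eq_Ico (t : ℕ) (s : Finset ℕ) (hsub : s ⊆ Finset.range t)
    (h : ∀ a b : ℕ, a ≤ b → b < t → a ∈ s → b ∈ s) : s = Finset.Ico (t - s.card) t := by
  have hlb : ∀ x ∈ s, t - s.card ≤ x := by
    intro x hx
    have hxt : x < t := Finset.mem_range.mp (hsub hx)
    have hss : Finset.Ico x t ⊆ s := by
      intro y hy
      rw [Finset.mem_Ico] at hy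
      exact h x y hy.1 hy.2 hx
    have := Finset.card_le_card hss
    rw [Nat.card_Ico] at this
    omega
  apply Finset.eq_of_subset_of_card_le
  · intro x hx
    rw [Finset.mem_Ico]
    exact ⟨hlb x hx, Finset.mem_range.mp (hsub hx)⟩
  · rw [Nat.card_Ico]
    omega

/-- number of rows `r < t` with `d r ≥ s` -/
def colLen (t : ℕ) (d : ℕ → ℕ) (s : ℕ) : ℕ :=
  ((Finset.range t).filter (fun r => s ≤ d r)).card

/-- the doubled size-difference functional -/
def PhiZ (t : ℕ) (d : ℕ → ℕ) : ℤ :=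
  (∑ r ∈ Finset.range t, (d r : ℤ) * (2*(t+1)*r - t*(d r) - t))
    - (∑ r ∈ Finset.range t, (d r : ℤ)) * (t*(t-1) - (∑ r ∈ Finset.range t, (d r : ℤ)) - 1)

lemma d_mono_le (t : ℕ) (d : ℕ → ℕ) (hmono : ∀ r, r + 1 < t → d r ≤ d (r+1)) :
    ∀ a b, a ≤ b → b < t → d a ≤ d b := by
  intro a b hab
  induction b with
  | zero => intro _; rw [Nat.le_zero.mp hab]
  | succ n ih =>
    intro hb
    rcases Nat.eq_or_lt_of_le hab with rfl | hlt
    · exact le_refl _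
    · exact le_trans (ih (by omega) (by omega)) (hmono n hb)

lemma colLen_filter_eq (t : ℕ) (d : ℕ → ℕ) (hmono : ∀ r, r + 1 < t → d r ≤ d (r+1)) (s : ℕ) :
    (Finset.range t).filter (fun r => s ≤ d r) = Finset.Ico (t - colLen t d s) t := by
  apply upper_eq_Ico t _ (Finset.filter_subset _ _)
  intro a b hab hb ha
  rw [Finset.mem_filter, Finset.mem_range] at ha ⊢
  exact ⟨hb, le_trans ha.2 (d_mono_le t d hmono a b hab hb)⟩

end MainIneq

section MainIneq2

lemma PhiZ_step (t : ℕ) (D : ℕ) (d : ℕ → ℕ)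
    (hle : ∀ r, r < t → d r ≤ r)
    (hmono : ∀ r, r + 1 < t → d r ≤ d (r+1))
    (ht : 1 ≤ t)
    (hD : d (t-1) = D + 1) :
    PhiZ t d ≥ PhiZ t (fun r => min (d r) D)
      + (colLen t d (D+1) : ℤ) * ((t : ℤ) - colLen t d (D+1)) * ((t : ℤ) + 2 - 2*(D+1)) := by
  classical
  set l := colLen t d (D+1) with hl
  have hfilter : (Finset.range t).filter (fun r => D + 1 ≤ d r) = Finset.Ico (t - l) t :=
    colLen_filter_eq t d hmono (D+1)
  have hmem : t - 1 ∈ (Finset.range t).filter (fun r => D + 1 ≤ d r) := by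
    rw [Finset.mem_filter, Finset.mem_range]
    exact ⟨by omega, by omega⟩
  have hl1 : 1 ≤ l := by
    rw [hl, colLen]
    exact Finset.card_pos.mpr ⟨t - 1, hmem⟩
  have hlt : l ≤ t := by
    rw [hl, colLen]
    exact le_trans (Finset.card_filter_le _ _) (by simp)
  set u := t - l with hu
  have huIco : u ∈ Finset.Ico u t := by rw [Finset.mem_Ico]; omega
  have hdu : D + 1 ≤ d u := by
    have : u ∈ (Finset.range t).filter (fun r => D + 1 ≤ d r) := by rw [hfilter]; exact huIco
    exact (Finset.mem_filter.mp this).2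
  have hDu : D + 1 ≤ u := le_trans hdu (hle u (by omega))
  -- on the interval, d r = D + 1
  have hEd : ∀ r ∈ Finset.Ico u t, d r = D + 1 := by
    intro r hr
    rw [← hfilter, Finset.mem_filter] at hr
    have h1 := hr.2
    have h2 : d r ≤ d (t-1) := d_mono_le t d hmono r (t-1)
      (by rw [Finset.mem_range] at hr; omega) (by omega)
    omega
  -- below the interval, d r ≤ D so min (d r) D = d r
  have hud : ∀ r, r < u → d r ≤ D := by
    intro r hr
    by_contra hc
    have : r ∈ (Finset.range t).filter (fun r => D + 1 ≤ d r) := by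
      rw [Finset.mem_filter, Finset.mem_range]
      exact ⟨by omega, by omega⟩
    rw [hfilter, Finset.mem_Ico] at this
    omega
  -- sum splitting
  have hsplit : ∀ f : ℕ → ℤ, ∑ r ∈ Finset.range t, f r
      = ∑ r ∈ Finset.range u, f r + ∑ r ∈ Finset.Ico u t, f r := by
    intro f
    rw [Finset.sum_range_add_sum_Ico f (show u ≤ t by omega)]
  set m' : ℤ := ∑ r ∈ Finset.range t, ((min (d r) D : ℕ) : ℤ) with hm'
  set A' : ℤ := ∑ r ∈ Finset.range t, ((min (d r) D : ℕ) : ℤ)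
      * (2*((t:ℤ)+1)*r - t*((min (d r) D : ℕ) : ℤ) - t) with hA'
  set R : ℤ := ∑ r ∈ Finset.Ico u t, (r : ℤ) with hR
  -- card of the interval
  have hcard : (Finset.Ico u t).card = l := by rw [Nat.card_Ico]; omega
  -- m = m' + l
  have hm_eq : (∑ r ∈ Finset.range t, ((d r : ℕ) : ℤ)) = m' + l := by
    rw [hm', hsplit, hsplit (fun r => ((min (d r) D : ℕ) : ℤ))]
    have e1 : ∑ r ∈ Finset.range u, ((min (d r) D : ℕ) : ℤ)
        = ∑ r ∈ Finset.range u, ((d r : ℕ) : ℤ) := by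
      apply Finset.sum_congr rfl
      intro r hr
      rw [Finset.mem_range] at hr
      rw [min_eq_left (hud r hr)]
    have e2 : ∑ r ∈ Finset.Ico u t, ((d r : ℕ) : ℤ) = l * (D + 1) := by
      rw [Finset.sum_congr rfl (fun r hr => by rw [hEd r hr] : ∀ r ∈ Finset.Ico u t, ((d r : ℕ):ℤ) = ((D+1 : ℕ) : ℤ))]
      rw [Finset.sum_const, hcard]
      push_cast
      ring
    have e3 : ∑ r ∈ Finset.Ico u t, ((min (d r) D : ℕ) : ℤ) = l * D := by
      have : ∀ r ∈ Finset.Ico u t, ((min (d r) D : ℕ) : ℤ) = ((D : ℕ) : ℤ) := by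
        intro r hr
        rw [hEd r hr]
        simp
      rw [Finset.sum_congr rfl this, Finset.sum_const, hcard]
      push_cast
      ring
    rw [e1, e2, e3]
    ring
  -- A = A' + 2(t+1) R - 2 t (D+1) l
  have hA_eq : (∑ r ∈ Finset.range t, ((d r : ℕ) : ℤ) * (2*((t:ℤ)+1)*r - t*((d r : ℕ) : ℤ) - t))
      = A' + 2*((t:ℤ)+1)*R - 2*t*((D:ℤ)+1)*l := by
    rw [hA', hsplit, hsplit (fun r => ((min (d r) D : ℕ) : ℤ) * (2*((t:ℤ)+1)*r - t*((min (d r) D : ℕ) : ℤ) - t))]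
    have e1 : ∑ r ∈ Finset.range u, ((min (d r) D : ℕ) : ℤ) * (2*((t:ℤ)+1)*r - t*((min (d r) D : ℕ) : ℤ) - t)
        = ∑ r ∈ Finset.range u, ((d r : ℕ) : ℤ) * (2*((t:ℤ)+1)*r - t*((d r : ℕ) : ℤ) - t) := by
      apply Finset.sum_congr rfl
      intro r hr
      rw [Finset.mem_range] at hr
      rw [min_eq_left (hud r hr)]
    have e2 : ∑ r ∈ Finset.Ico u t, ((d r : ℕ) : ℤ) * (2*((t:ℤ)+1)*r - t*((d r : ℕ) : ℤ) - t)
        = ∑ r ∈ Finset.Ico u t, (((D:ℤ)+1) * (2*((t:ℤ)+1)*r - t*((D:ℤ)+1) - t)) := by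
      apply Finset.sum_congr rfl
      intro r hr
      rw [hEd r hr]
      push_cast
      ring
    have e3 : ∑ r ∈ Finset.Ico u t, ((min (d r) D : ℕ) : ℤ) * (2*((t:ℤ)+1)*r - t*((min (d r) D : ℕ) : ℤ) - t)
        = ∑ r ∈ Finset.Ico u t, (((D:ℤ)) * (2*((t:ℤ)+1)*r - t*((D:ℤ)) - t)) := by
      apply Finset.sum_congr rfl
      intro r hr
      rw [hEd r hr]
      push_cast
      simp
    rw [e1, e2, e3]
    have e4 : ∑ r ∈ Finset.Ico u t, (((D:ℤ)+1) * (2*((t:ℤ)+1)*r - t*((D:ℤ)+1) - t))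
        = ((D:ℤ)+1) * (2*((t:ℤ)+1)*R - (t*((D:ℤ)+1) + t)*l) := by
      rw [Finset.sum_congr rfl (fun r _ => by ring :
        ∀ r ∈ Finset.Ico u t, (((D:ℤ)+1) * (2*((t:ℤ)+1)*r - t*((D:ℤ)+1) - t))
          = (((D:ℤ)+1) * (2*((t:ℤ)+1)))*r - ((D:ℤ)+1)*(t*((D:ℤ)+1) + t))]
      rw [Finset.sum_sub_distrib, ← Finset.mul_sum, Finset.sum_const, hcard]
      push_cast
      ring
    have e5 : ∑ r ∈ Finset.Ico u t, (((D:ℤ)) * (2*((t:ℤ)+1)*r - t*((D:ℤ)) - t))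
        = ((D:ℤ)) * (2*((t:ℤ)+1)*R - (t*((D:ℤ)) + t)*l) := by
      rw [Finset.sum_congr rfl (fun r _ => by ring :
        ∀ r ∈ Finset.Ico u t, (((D:ℤ)) * (2*((t:ℤ)+1)*r - t*((D:ℤ)) - t))
          = (((D:ℤ)) * (2*((t:ℤ)+1)))*r - ((D:ℤ))*(t*((D:ℤ)) + t))]
      rw [Finset.sum_sub_distrib, ← Finset.mul_sum, Finset.sum_const, hcard]
      push_cast
      ring
    rw [e4, e5]
    ring
  -- 2 R = l (2t - l - 1)
  have h2R : 2 * R = (l:ℤ) * (2*t - l - 1) := by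
    have g1 : (∑ r ∈ Finset.range t, r) * 2 = t * (t-1) := Finset.sum_range_id_mul_two t
    have g2 : (∑ r ∈ Finset.range u, r) * 2 = u * (u-1) := Finset.sum_range_id_mul_two u
    have g3 : ∑ r ∈ Finset.range u, r + ∑ r ∈ Finset.Ico u t, r = ∑ r ∈ Finset.range t, r :=
      Finset.sum_range_add_sum_Ico _ (show u ≤ t by omega)
    have g4 : (∑ r ∈ Finset.Ico u t, r) * 2 + u*(u-1) = t*(t-1) := by omega
    have g5 : R = ((∑ r ∈ Finset.Ico u t, r : ℕ) : ℤ) := by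
      rw [hR]
      push_cast
      rfl
    have g6 : ((u:ℕ):ℤ) = (t:ℤ) - l := by
      rw [hu]
      push_cast [Nat.cast_sub hlt]
      ring
    -- cast g4
    have g7 : ((∑ r ∈ Finset.Ico u t, r : ℕ) : ℤ) * 2 + ((u:ℕ):ℤ)*(((u:ℕ):ℤ)-1) = (t:ℤ)*((t:ℤ)-1) := by
      have hu1 : (1:ℕ) ≤ u := by omega
      have := congrArg (fun x : ℕ => (x : ℤ)) g4
      push_cast at this
      rw [Nat.cast_sub hu1, Nat.cast_sub ht] at this
      push_cast at this
      linarith [this]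
    rw [← g5] at g7
    rw [g6] at g7
    linarith [g7]
  -- m' ≥ l * D
  have hm'ge : m' ≥ (l:ℤ) * D := by
    rw [hm', hsplit (fun r => ((min (d r) D : ℕ) : ℤ))]
    have e3 : ∑ r ∈ Finset.Ico u t, ((min (d r) D : ℕ) : ℤ) = l * D := by
      have : ∀ r ∈ Finset.Ico u t, ((min (d r) D : ℕ) : ℤ) = ((D : ℕ) : ℤ) := by
        intro r hr
        rw [hEd r hr]
        simp
      rw [Finset.sum_congr rfl this, Finset.sum_const, hcard]
      push_cast
      ring
    rw [e3]
    have : (0:ℤ) ≤ ∑ r ∈ Finset.range u, ((min (d r) D : ℕ) : ℤ) :=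
      Finset.sum_nonneg (fun r _ => by positivity)
    linarith
  -- final: unfold PhiZ and finish
  rw [PhiZ, PhiZ]
  rw [hA_eq, hm_eq]
  rw [← hm', ← hA']
  nlinarith [hm'ge, h2R, mul_nonneg (show (0:ℤ) ≤ l by positivity) (show (0:ℤ) ≤ m' - l*D by linarith)]

end MainIneq2

section MainIneq3

lemma PhiZ_ge_colsum (t : ℕ) (ht : 1 ≤ t) :
    ∀ D (d : ℕ → ℕ), (∀ r, r < t → d r ≤ r) → (∀ r, r+1 < t → d r ≤ d (r+1)) → d (t-1) ≤ D →
    PhiZ t d ≥ ∑ s ∈ Finset.Icc 1 (d (t-1)),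
      (colLen t d s : ℤ) * ((t:ℤ) - colLen t d s) * ((t:ℤ) + 2 - 2*s) := by
  intro D
  induction D with
  | zero =>
    intro d hle hmono hD
    have hzero : ∀ r, r < t → d r = 0 := fun r hr =>
      Nat.le_zero.mp (le_trans (d_mono_le t d hmono r (t-1) (by omega) (by omega)) (by omega))
    have h1 : d (t-1) = 0 := hzero _ (by omega)
    rw [h1, Finset.Icc_eq_empty (by omega : ¬ (1:ℕ) ≤ 0)]
    have hs1 : ∑ r ∈ Finset.range t, ((d r : ℕ):ℤ) * (2*((t:ℤ)+1)*r - t*((d r : ℕ):ℤ) - t) = 0 :=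
      Finset.sum_eq_zero (fun r hr => by rw [hzero r (Finset.mem_range.mp hr)]; simp)
    have hs2 : ∑ r ∈ Finset.range t, ((d r : ℕ):ℤ) = 0 :=
      Finset.sum_eq_zero (fun r hr => by rw [hzero r (Finset.mem_range.mp hr)]; simp)
    rw [PhiZ, hs1, hs2]
    simp
  | succ D ih =>
    intro d hle hmono hD
    rcases Nat.lt_or_ge (d (t-1)) (D+1) with h | h
    · exact ih d hle hmono (by omega)
    · have hDt : d (t-1) = D + 1 := by omega
      have hstep := PhiZ_step t D d hle hmono ht hDt
      have hle' : ∀ r, r < t → min (d r) D ≤ r := fun r hr =>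
        le_trans (min_le_left _ _) (hle r hr)
      have hmono' : ∀ r, r+1 < t → min (d r) D ≤ min (d (r+1)) D := fun r hr =>
        min_le_min (hmono r hr) (le_refl D)
      have hd't : min (d (t-1)) D = D := by rw [hDt]; simp
      have hih := ih (fun r => min (d r) D) hle' hmono' (by simp [hd't])
      simp only [hd't] at hih
      have hcol : ∀ s, 1 ≤ s → s ≤ D → colLen t (fun r => min (d r) D) s = colLen t d s := by
        intro s hs1 hs2
        unfold colLen
        congr 1
        apply Finset.filter_congr
        intro r _
        simp only [le_min_iff, decide_eq_true_eq]
        constructor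
        · intro h'; exact h'.1
        · intro h'; exact ⟨h', by omega⟩
      rw [hDt]
      rw [Finset.sum_Icc_succ_top (by omega : (1:ℕ) ≤ D + 1)]
      have hsum_eq : ∑ s ∈ Finset.Icc 1 D,
            (colLen t d s : ℤ) * ((t:ℤ) - colLen t d s) * ((t:ℤ) + 2 - 2*s)
          = ∑ s ∈ Finset.Icc 1 D,
            (colLen t (fun r => min (d r) D) s : ℤ) * ((t:ℤ) - colLen t (fun r => min (d r) D) s)
              * ((t:ℤ) + 2 - 2*s) := by
        apply Finset.sum_congr rfl
        intro s hs
        rw [Finset.mem_Icc] at hs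
        rw [hcol s hs.1 hs.2]
      rw [hsum_eq]
      have hc : ((D:ℤ) + 1) = (((D+1 : ℕ)):ℤ) := by push_cast; ring
      rw [← hc]
      linarith [hstep, hih]

end MainIneq3

section ColSum

lemma colsum_ge (t D : ℕ) (l : ℕ → ℕ)
    (hl1 : ∀ s, 1 ≤ s → s ≤ D → 1 ≤ l s)
    (hl2 : ∀ s, 1 ≤ s → s ≤ D → l s + s ≤ t)
    (hmono : ∀ s s', 1 ≤ s → s ≤ s' → s' ≤ D → l s' ≤ l s)
    (hD : 1 ≤ D) :
    ((t:ℤ) * ((t:ℤ)-1)) ≤ ∑ s ∈ Finset.Icc 1 D, (l s : ℤ) * ((t:ℤ) - l s) * ((t:ℤ) + 2 - 2*s) := by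
  set f : ℕ → ℤ := fun s => (l s : ℤ) * ((t:ℤ) - l s) * ((t:ℤ) + 2 - 2*s) with hf
  have hDt : D ≤ t - 1 := by
    have := hl2 D hD (le_refl D)
    have := hl1 D hD (le_refl D)
    omega
  have hins : Finset.Icc 1 D = insert 1 (Finset.Icc 2 D) := by
    apply Finset.ext
    intro x
    rw [Finset.mem_insert, Finset.mem_Icc, Finset.mem_Icc]
    omega
  rw [hins, Finset.sum_insert (by rw [Finset.mem_Icc]; omega)]
  -- first term
  have hfirst : ((t:ℤ) * ((t:ℤ)-1)) ≤ f 1 := by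
    rw [hf]
    simp only
    have h1 := hl1 1 (le_refl 1) hD
    have h2 := hl2 1 (le_refl 1) hD
    have ha : (1:ℤ) ≤ (l 1 : ℤ) := by exact_mod_cast h1
    have hb : (l 1 : ℤ) + 1 ≤ t := by exact_mod_cast h2
    have h3 : (0:ℤ) ≤ ((l 1:ℤ) - 1) * ((t:ℤ) - 1 - (l 1:ℤ)) :=
      mul_nonneg (by linarith) (by linarith)
    have ht0 : (0:ℤ) ≤ (t:ℤ) := by positivity
    push_cast
    nlinarith [mul_nonneg h3 ht0]
  -- rest is nonnegative
  have hrest : (0:ℤ) ≤ ∑ s ∈ Finset.Icc 2 D, f s := by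
    set S := Finset.Icc 2 D with hS
    set Neg := S.filter (fun s => t + 2 < 2*s) with hNeg
    set Pos := S.filter (fun s => ¬ t + 2 < 2*s) with hPos
    have hsplit : ∑ s ∈ Neg, f s + ∑ s ∈ Pos, f s = ∑ s ∈ S, f s :=
      Finset.sum_filter_add_sum_filter_not S (fun s => t + 2 < 2*s) f
    have hPos0 : ∀ s ∈ Pos, 0 ≤ f s := by
      intro s hs
      rw [hPos, Finset.mem_filter, hS, Finset.mem_Icc] at hs
      obtain ⟨⟨hs2, hsD⟩, hst⟩ := hs
      have h2 := hl2 s (by omega) hsD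
      rw [hf]
      simp only
      have c1 : (0:ℤ) ≤ (l s : ℤ) := by positivity
      have c2 : (0:ℤ) ≤ (t:ℤ) - (l s : ℤ) := by
        have : (l s : ℤ) + s ≤ t := by exact_mod_cast h2
        have hs0 : (0:ℤ) ≤ (s:ℤ) := by positivity
        linarith
      have c3 : (0:ℤ) ≤ (t:ℤ) + 2 - 2*s := by
        have : (2*s : ℤ) ≤ (t:ℤ) + 2 := by exact_mod_cast (by omega : 2*s ≤ t + 2)
        linarith
      positivity
    have hpair : ∀ s ∈ Neg, -f s ≤ f (t + 2 - s) := by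
      intro s hs
      rw [hNeg, Finset.mem_filter, hS, Finset.mem_Icc] at hs
      obtain ⟨⟨hs2, hsD⟩, hst⟩ := hs
      have he1 : 1 ≤ t + 2 - s := by omega
      have he2 : t + 2 - s ≤ D := by omega
      have hab : l s ≤ l (t + 2 - s) := hmono (t+2-s) s he1 (by omega) hsD
      have ha := hl2 (t+2-s) he1 he2
      have hb := hl2 s (by omega) hsD
      have hcast : ((t + 2 - s : ℕ) : ℤ) = (t:ℤ) + 2 - s := by
        rw [Nat.cast_sub (by omega)]
        push_cast
        ring
      rw [hf]
      simp only [hcast]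
      have c1 : ((l s : ℕ) : ℤ) ≤ ((l (t+2-s) : ℕ) : ℤ) := by exact_mod_cast hab
      have c2 : ((l (t+2-s) : ℕ) : ℤ) + ((t:ℤ)+2-s) ≤ t := by
        have h' : ((l (t+2-s) : ℕ) : ℤ) + ((t+2-s : ℕ) : ℤ) ≤ t := by exact_mod_cast ha
        rw [hcast] at h'
        exact h'
      have c3 : ((l s : ℕ) : ℤ) + (s:ℤ) ≤ t := by exact_mod_cast hb
      set a := (l (t+2-s) : ℤ)
      set b := (l s : ℤ)
      have c4 : (0:ℤ) < 2*s - t - 2 := by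
        have : (t:ℤ) + 2 < 2*s := by exact_mod_cast hst
        linarith
      have c5 : (0:ℤ) ≤ b := by positivity
      nlinarith [mul_nonneg (mul_nonneg (by linarith : (0:ℤ) ≤ a - b)
        (by linarith : (0:ℤ) ≤ (t:ℤ) - a - b)) (le_of_lt c4)]
    have hNsum : ∑ s ∈ Neg, (-f s) ≤ ∑ s ∈ Neg, f (t + 2 - s) :=
      Finset.sum_le_sum hpair
    have hinj : ∀ x ∈ Neg, ∀ y ∈ Neg, t + 2 - x = t + 2 - y → x = y := by
      intro x hx y hy hxy
      rw [hNeg, Finset.mem_filter, hS, Finset.mem_Icc] at hx hy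
      omega
    have himage : ∑ s ∈ Neg.image (fun s => t + 2 - s), f s = ∑ s ∈ Neg, f (t + 2 - s) :=
      Finset.sum_image hinj
    have hsub : Neg.image (fun s => t + 2 - s) ⊆ Pos := by
      intro x hx
      rw [Finset.mem_image] at hx
      obtain ⟨s, hs, rfl⟩ := hx
      rw [hNeg, Finset.mem_filter, hS, Finset.mem_Icc] at hs
      rw [hPos, Finset.mem_filter, hS, Finset.mem_Icc]
      omega
    have hle2 : ∑ s ∈ Neg.image (fun s => t + 2 - s), f s ≤ ∑ s ∈ Pos, f s :=
      Finset.sum_le_sum_of_subset_of_nonneg hsub (fun i hi _ => hPos0 i hi)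
    have : ∑ s ∈ Neg, (-f s) = - ∑ s ∈ Neg, f s := by rw [Finset.sum_neg_distrib]
    linarith [hsplit, hNsum, himage ▸ hle2]
  show ((t:ℤ) * ((t:ℤ)-1)) ≤ f 1 + ∑ s ∈ Finset.Icc 2 D, f s
  linarith [hfirst, hrest]

end ColSum

section MainIneq4

lemma main_ineq (t : ℕ) (d : ℕ → ℕ)
    (hle : ∀ r, r < t → d r ≤ r)
    (hmono : ∀ r, r + 1 < t → d r ≤ d (r+1))
    (hpos : ∃ r, r < t ∧ 0 < d r) :
    0 < PhiZ t d := by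
  obtain ⟨r0, hr0, hd0⟩ := hpos
  have ht : 1 ≤ t := by omega
  have ht2 : 2 ≤ t := by have := hle r0 hr0; omega
  have hDpos : 1 ≤ d (t-1) :=
    le_trans hd0 (d_mono_le t d hmono r0 (t-1) (by omega) (by omega))
  have hmain := PhiZ_ge_colsum t ht (d (t-1)) d hle hmono (le_refl _)
  have hcolle : ∀ s, colLen t d s ≤ t := by
    intro s
    unfold colLen
    exact le_trans (Finset.card_filter_le _ _) (by simp)
  have hcol1 : ∀ s, 1 ≤ s → s ≤ d (t-1) → 1 ≤ colLen t d s := by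
    intro s hs1 hs2
    unfold colLen
    refine Finset.card_pos.mpr ⟨t-1, ?_⟩
    rw [Finset.mem_filter, Finset.mem_range]
    exact ⟨by omega, by omega⟩
  have hcol2 : ∀ s, 1 ≤ s → s ≤ d (t-1) → colLen t d s + s ≤ t := by
    intro s hs1 hs2
    have hfil := colLen_filter_eq t d hmono s
    have h1 := hcol1 s hs1 hs2
    have hmem : t - colLen t d s ∈ (Finset.range t).filter (fun r => s ≤ d r) := by
      rw [hfil, Finset.mem_Ico]
      have := hcolle s
      omega
    rw [Finset.mem_filter, Finset.mem_range] at hmem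
    have := hle (t - colLen t d s) hmem.1
    omega
  have hcolmono : ∀ s s', 1 ≤ s → s ≤ s' → s' ≤ d (t-1) → colLen t d s' ≤ colLen t d s := by
    intro s s' _ hss' _
    unfold colLen
    apply Finset.card_le_card
    intro x hx
    rw [Finset.mem_filter] at hx ⊢
    exact ⟨hx.1, by omega⟩
  have hcs := colsum_ge t (d (t-1)) (colLen t d) hcol1 hcol2 hcolmono hDpos
  have htZ : (2:ℤ) ≤ (t:ℤ) := by exact_mod_cast ht2
  have : (0:ℤ) < (t:ℤ) * ((t:ℤ) - 1) := by nlinarith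
  linarith [hmain, hcs]

lemma cast_mul_pred (n : ℕ) : ((n*(n-1) : ℕ) : ℤ) = (n:ℤ)*((n:ℤ)-1) := by
  match n with
  | 0 => simp
  | (m+1) =>
    rw [show m+1-1 = m from rfl]
    push_cast
    ring

lemma cast_pred_mul (n : ℕ) : (n:ℤ) * ((n-1 : ℕ):ℤ) = (n:ℤ)*((n:ℤ)-1) := by
  match n with
  | 0 => simp
  | (m+1) =>
    rw [show m+1-1 = m from rfl]
    push_cast
    ring

end MainIneq4

namespace NatPartition

lemma zero_not_mem_betaSet (l : NatPartition) : 0 ∉ l.betaSet := by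
  rw [mem_betaSet_iff]
  rintro ⟨i, hi, he⟩
  have h1 := l.hk_eq hi
  have h2 := l.lam_pos hi
  omega

end NatPartition

section Final

variable {t : ℕ}

def kappa (t : ℕ) : NatPartition := NatPartition.ofBeta (Pset t) (fun b hb => Pset_pos hb)

lemma betaSet_kappa (t : ℕ) : (kappa t).betaSet = Pset t :=
  NatPartition.betaSet_ofBeta _ _

lemma kappa_isCore_t (ht : 0 < t) : (kappa t).IsCore t := by
  rw [(kappa t).isCore_iff_s16 ht, betaSet_kappa]
  exact fun b hb htb => Pset_sub_t ht hb htb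

lemma kappa_isCore_t1 (ht : 0 < t) : (kappa t).IsCore (t+1) := by
  rw [(kappa t).isCore_iff_s16 (by omega : 0 < t + 1), betaSet_kappa]
  exact fun b hb htb => Pset_sub_t1 ht hb htb

lemma kappa_k (t : ℕ) : (kappa t).k = (Pset t).card := by
  rw [← (kappa t).card_betaSet, betaSet_kappa]

lemma size_kappa (ht : 0 < t) : (kappa t).size = (t+2).choose 4 := by
  have hsum := (kappa t).sum_betaSet
  rw [betaSet_kappa, kappa_k] at hsum
  have h1 := sum_Pset_six ht
  have h2 := card_Pset_two ht
  have h3 := ch4_t t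
  have h4 := size_aux (t := t) h1 h2 h3
  omega

lemma inner2 (t n r : ℕ) : 2 * (∑ q ∈ Finset.range n, (q*t+r)) = t*(n*(n-1)) + 2*r*n := by
  have h1 : ∑ q ∈ Finset.range n, (q*t+r) = (∑ q ∈ Finset.range n, q) * t + n * r := by
    rw [Finset.sum_add_distrib, ← Finset.sum_mul]
    congr 1
    rw [Finset.sum_const, Finset.card_range, smul_eq_mul]
  have h2 := Finset.sum_range_id_mul_two n
  calc 2 * (∑ q ∈ Finset.range n, (q*t+r)) = ((∑ q ∈ Finset.range n, q) * 2) * t + 2*r*n := by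
        rw [h1]; ring
    _ = t*(n*(n-1)) + 2*r*n := by rw [h2]; ring

lemma core_size_lt (ht : 0 < t) (l : NatPartition) (hco1 : l.IsCore t) (hco2 : l.IsCore (t+1))
    (hne : l.betaSet ≠ Pset t) : l.size < (t+2).choose 4 := by
  set B := l.betaSet with hB
  have hc1 : ∀ b ∈ B, t ≤ b → b - t ∈ B := (l.isCore_iff_s16 ht).mp hco1
  have hc2 : ∀ b ∈ B, t+1 ≤ b → b - (t+1) ∈ B := (l.isCore_iff_s16 (by omega : 0 < t+1)).mp hco2
  have h0 : 0 ∉ B := l.zero_not_mem_betaSet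
  have hBP : B ⊆ Pset t := closed_subset_Pset ht B h0 hc1 hc2
  set c := cfun t B with hc
  have hBeq : B = chainSet t c := B_eq_chainSet ht B hBP hc1
  have hcle : ∀ r, c r ≤ r := cfun_le B
  have hcstep : ∀ r, r + 1 < t → c (r+1) ≤ c r + 1 := fun r hr => cfun_step ht B hBP hc1 hc2 hr
  set d := fun r => r - c r with hd
  have hdle : ∀ r, r < t → d r ≤ r := fun r _ => by simp only [hd]; omega
  have hdmono : ∀ r, r + 1 < t → d r ≤ d (r+1) := by
    intro r hr
    have h1 := hcstep r hr
    have h2 := hcle r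
    simp only [hd]
    omega
  have hdpos : ∃ r, r < t ∧ 0 < d r := by
    by_contra hcon
    push_neg at hcon
    apply hne
    rw [hBeq]
    unfold Pset
    apply Finset.ext; intro x
    rw [mem_chainSet, mem_chainSet]
    constructor
    · rintro ⟨q, r, hq, hr, rfl⟩
      exact ⟨q, r, by have := hcle r; omega, hr, rfl⟩
    · rintro ⟨q, r, hq, hr, rfl⟩
      refine ⟨q, r, ?_, hr, rfl⟩
      have h3 := hcon r hr
      simp only [hd] at h3
      have := hcle r
      omega
  have hPhi := main_ineq t d hdle hdmono hdpos
  -- notation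
  have hkB : B.card = ∑ r ∈ Finset.range t, c r := by rw [hBeq]; exact chainSet_card ht c
  have hSB : ∑ b ∈ B, b = ∑ r ∈ Finset.range t, ∑ q ∈ Finset.range (c r), (q*t+r) := by
    rw [hBeq]; exact chainSet_sum ht c
  have hNP : (Pset t).card = ∑ r ∈ Finset.range t, r := by
    unfold Pset; exact chainSet_card ht _
  have hSP : ∑ b ∈ Pset t, b = ∑ r ∈ Finset.range t, ∑ q ∈ Finset.range r, (q*t+r) := by
    unfold Pset; exact chainSet_sum ht _
  -- E1 : the Phi sum equals 2(ΣP - ΣB)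
  have e_per : ∀ r ∈ Finset.range t,
      ((d r : ℕ):ℤ) * (2*((t:ℤ)+1)*r - t*((d r : ℕ):ℤ) - t)
        = 2*((∑ q ∈ Finset.range r, (q*t+r) : ℕ):ℤ)
          - 2*((∑ q ∈ Finset.range (c r), (q*t+r) : ℕ):ℤ) := by
    intro r _
    have hX := congrArg (fun x : ℕ => (x:ℤ)) (inner2 t r r)
    have hY := congrArg (fun x : ℕ => (x:ℤ)) (inner2 t (c r) r)
    push_cast at hX hY
    rw [cast_pred_mul r] at hX
    rw [cast_pred_mul (c r)] at hY
    have hDcast : ((d r : ℕ):ℤ) = (r:ℤ) - (c r : ℤ) := by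
      simp only [hd]
      rw [Nat.cast_sub (hcle r)]
    rw [hDcast]
    push_cast
    linear_combination hY - hX
  have E1 : ∑ r ∈ Finset.range t, ((d r : ℕ):ℤ) * (2*((t:ℤ)+1)*r - t*((d r : ℕ):ℤ) - t)
      = 2*((∑ b ∈ Pset t, b : ℕ):ℤ) - 2*((∑ b ∈ B, b : ℕ):ℤ) := by
    rw [Finset.sum_congr rfl e_per, Finset.sum_sub_distrib, ← Finset.mul_sum, ← Finset.mul_sum]
    rw [hSP, hSB]
    push_cast
    ring
  have E2 : ∑ r ∈ Finset.range t, ((d r : ℕ):ℤ) = ((Pset t).card : ℤ) - (B.card : ℤ) := by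
    have : ∀ r ∈ Finset.range t, ((d r : ℕ):ℤ) = (r:ℤ) - (c r : ℤ) := by
      intro r _
      simp only [hd]
      rw [Nat.cast_sub (hcle r)]
    rw [Finset.sum_congr rfl this, Finset.sum_sub_distrib, hNP, hkB]
    push_cast
    ring
  have E4 : (t:ℤ)*((t:ℤ)-1) = 2*((Pset t).card : ℤ) := by
    have := congrArg (fun x : ℕ => (x:ℤ)) (card_Pset_two ht)
    push_cast at this
    rw [cast_pred_mul t] at this
    linarith
  rw [PhiZ, E1, E2, E4] at hPhi
  set NZ : ℤ := ((Pset t).card : ℤ) with hNZ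
  set kZ : ℤ := (B.card : ℤ) with hkZ
  set PZ : ℤ := ((∑ b ∈ Pset t, b : ℕ):ℤ) with hPZ
  set BZ : ℤ := ((∑ b ∈ B, b : ℕ):ℤ) with hBZ
  have expand : (NZ - kZ)*(2*NZ - (NZ - kZ) - 1) = NZ*(NZ-1) - kZ*(kZ-1) := by ring
  have hstrict : 2*BZ + NZ*(NZ-1) < 2*PZ + kZ*(kZ-1) := by nlinarith [hPhi, expand]
  -- convert to sizes
  have hbl := l.sum_betaSet
  have hblk : l.betaSet.card = l.k := l.card_betaSet
  have hbk := (kappa t).sum_betaSet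
  rw [betaSet_kappa, kappa_k] at hbk
  -- cast to ℤ
  have hblZ := congrArg (fun x : ℕ => (x:ℤ)) hbl
  have hbkZ := congrArg (fun x : ℕ => (x:ℤ)) hbk
  push_cast at hblZ hbkZ
  rw [cast_pred_mul l.k] at hblZ
  rw [cast_pred_mul (Pset t).card] at hbkZ
  have hkZeq : kZ = (l.k : ℤ) := by rw [hkZ, hB, hblk]
  have hPZ' : PZ = ∑ x ∈ Pset t, (x:ℤ) := by rw [hPZ]; push_cast; rfl
  have hsize : (l.size : ℤ) < ((kappa t).size : ℤ) := by
    rw [hkZeq] at hstrict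
    have hBZ' : BZ = ((∑ b ∈ l.betaSet, b : ℕ):ℤ) := by rw [hBZ, hB]
    rw [hBZ', hNZ, hPZ'] at hstrict
    push_cast at hstrict
    linarith [hblZ, hbkZ, hstrict]
  have : l.size < (kappa t).size := by exact_mod_cast hsize
  rw [size_kappa ht] at this
  exact this

end Final

theorem stmt16 (t : ℕ) (ht : 0 < t) :
    IsGreatest {s : ℕ | ∃ l : NatPartition, l.IsCore t ∧ l.IsCore (t + 1) ∧ l.size = s}
      ((t + 2).choose 4) ∧
    {l : NatPartition | l.IsCore t ∧ l.IsCore (t + 1) ∧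
      l.size = (t + 2).choose 4}.ncard = 1 := by
  have hmem : (kappa t).IsCore t ∧ (kappa t).IsCore (t+1) ∧ (kappa t).size = (t+2).choose 4 :=
    ⟨kappa_isCore_t ht, kappa_isCore_t1 ht, size_kappa ht⟩
  have hub : ∀ l : NatPartition, l.IsCore t → l.IsCore (t+1) → l.size ≤ (t+2).choose 4 := by
    intro l h1 h2
    rcases eq_or_ne l.betaSet (Pset t) with he | hne
    · have h3 : l = kappa t := l.eq_of_betaSet_eq (kappa t) (by rw [he, betaSet_kappa])
      rw [h3, size_kappa ht]
    · exact le_of_lt (core_size_lt ht l h1 h2 hne)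
  have huniq : ∀ l : NatPartition, l.IsCore t → l.IsCore (t+1) →
      l.size = (t+2).choose 4 → l = kappa t := by
    intro l h1 h2 h3
    rcases eq_or_ne l.betaSet (Pset t) with he | hne
    · exact l.eq_of_betaSet_eq (kappa t) (by rw [he, betaSet_kappa])
    · exact absurd h3 (Nat.ne_of_lt (core_size_lt ht l h1 h2 hne))
  refine ⟨⟨⟨kappa t, hmem.1, hmem.2.1, hmem.2.2⟩, ?_⟩, ?_⟩
  · rintro s ⟨l, h1, h2, rfl⟩
    exact hub l h1 h2
  · have hsingle : {l : NatPartition | l.IsCore t ∧ l.IsCore (t + 1) ∧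
        l.size = (t + 2).choose 4} = {kappa t} := by
      apply Set.eq_singleton_iff_unique_mem.mpr
      exact ⟨⟨hmem.1, hmem.2.1, hmem.2.2⟩, fun l hl => huniq l hl.1 hl.2.1 hl.2.2⟩
    rw [hsingle, Set.ncard_singleton]
end
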